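/- arXiv:math/0304005 — 6 statements merged into one kernel-verified Lean document; each statement's English description precedes it below -/
import Mathlib

section
/- Let N = Q \ R be the 'notched cube' in ℝ^d, where Q = [−1/2, 1/2]^d and R = ∏_{j=1}^d [1/2 − δ_j, 1/2] with 0 < δ_j < 1 for each j. Then N admits a lattice tiling of ℝ^d: with Λ = A^T ℤ^d, where A is the matrix with A_{jj} = 1, A_{j,j+1} = −δ_{j+1} (cyclically, A_{d,1} = −δ_1), and 0 elsewhere, the translates N + λ, λ ∈ Λ, cover ℝ^d with overlaps of measure zero, i.e. ∑_{λ∈Λ} χ_N(x − λ) = 1 for almost every x. -/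
open MeasureTheory

lemma ncube_floor_iff {a : ℝ} (ha : ∀ k : ℤ, a ≠ k) (m : ℤ) :
    (a - 1 ≤ (m : ℝ) ∧ (m : ℝ) ≤ a) ↔ m = ⌊a⌋ := by
  constructor
  · rintro ⟨h1, h2⟩
    have hle : m ≤ ⌊a⌋ := Int.le_floor.2 h2
    rcases eq_or_lt_of_le hle with h | h
    · exact h
    · exfalso
      have : (m : ℝ) + 1 ≤ ⌊a⌋ := by exact_mod_cast h
      have hma : (m : ℝ) ≤ a - 1 := by linarith [Int.floor_le a]
      have : (m : ℝ) = a - 1 := le_antisymm hma h1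
      exact ha (m + 1) (by push_cast; linarith)
  · rintro rfl
    refine ⟨?_, Int.floor_le a⟩
    have := Int.lt_floor_add_one a
    linarith

lemma ncube_ivt (g : ℤ → ℤ) (hg : ∀ t, g t - 1 ≤ g (t + 1)) :
    ∀ (n : ℕ) (a : ℤ), 0 ≤ g a → g (a + n) ≤ 0 → ∃ c, g c = 0 := by
  intro n
  induction n with
  | zero => intro a h0 h1; exact ⟨a, le_antisymm (by simpa using h1) h0⟩
  | succ k ih =>
    intro a h0 h1
    rcases eq_or_lt_of_le h0 with he | hl
    · exact ⟨a, he.symm⟩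
    · refine ih (a + 1) (by have := hg a; omega) ?_
      have h : a + 1 + (k : ℤ) = a + ((k : ℕ) + 1 : ℕ) := by push_cast; ring
      rw [h]; exact h1

open Fin.NatCast in
lemma ncube_key {d : ℕ} [NeZero d] (δ : Fin d → ℝ) (hδ : ∀ j, 0 < δ j ∧ δ j < 1)
    (x : Fin d → ℝ) (hx : ∀ (j : Fin d) (n k : ℤ), x j + δ j * (n : ℝ) + 1/2 ≠ (k : ℝ)) :
    ∃ M : Fin d → ℤ, ∀ m : Fin d → ℤ,
      ((∀ j, -(1/2 : ℝ) ≤ x j - ((m j : ℝ) - δ j * (m (j - 1) : ℝ)) ∧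
          x j - ((m j : ℝ) - δ j * (m (j - 1) : ℝ)) ≤ 1/2) ∧
       ¬ (∀ j, (1/2 : ℝ) - δ j ≤ x j - ((m j : ℝ) - δ j * (m (j - 1) : ℝ)) ∧
          x j - ((m j : ℝ) - δ j * (m (j - 1) : ℝ)) ≤ 1/2)) ↔ m = M := by
  classical
  set f : Fin d → ℤ → ℤ := fun j n => ⌊x j + δ j * (n : ℝ) + 1/2⌋ with hf
  have hQc : ∀ (j : Fin d) (n mj : ℤ),
      (-(1/2 : ℝ) ≤ x j - ((mj : ℝ) - δ j * (n : ℝ)) ∧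
        x j - ((mj : ℝ) - δ j * (n : ℝ)) ≤ 1/2) ↔ mj = f j n := by
    intro j n mj
    have h := ncube_floor_iff (a := x j + δ j * (n : ℝ) + 1/2) (fun k => hx j n k) mj
    rw [← h]
    constructor <;> rintro ⟨h1, h2⟩ <;> constructor <;> linarith
  have hfmono : ∀ j, Monotone (f j) := by
    intro j a b hab
    apply Int.floor_le_floor
    have : δ j * (a : ℝ) ≤ δ j * b :=
      mul_le_mul_of_nonneg_left (by exact_mod_cast hab) (hδ j).1.le
    linarith
  have hflb : ∀ (j : Fin d) (n : ℤ), (x j + δ j * (n : ℝ) + 1/2) - 1 < (f j n : ℝ) :=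
    fun j n => Int.sub_one_lt_floor _
  have hfub : ∀ (j : Fin d) (n : ℤ), (f j n : ℝ) ≤ x j + δ j * (n : ℝ) + 1/2 :=
    fun j n => Int.floor_le _
  have hfstep : ∀ j n, f j (n + 1) ≤ f j n + 1 := by
    intro j n
    have h1 : f j (n+1) ≤ ⌊(x j + δ j * (n : ℝ) + 1/2) + (1 : ℤ)⌋ := by
      apply Int.floor_le_floor
      push_cast
      nlinarith [(hδ j).2]
    have h2 : ⌊(x j + δ j * (n : ℝ) + 1/2) + (1 : ℤ)⌋ = f j n + 1 := Int.floor_add_intCast _ _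
    rw [h2] at h1; exact h1
  obtain ⟨P, hP0, hPs⟩ : ∃ P : ℤ → ℕ → ℤ, (∀ t, P t 0 = t) ∧
      ∀ t k, P t (k + 1) = f ((k + 1 : ℕ) : Fin d) (P t k) :=
    ⟨fun t k => Nat.rec t (fun k ih => f ((k + 1 : ℕ) : Fin d) ih) k,
      fun t => rfl, fun t k => rfl⟩
  have hPmono : ∀ k, ∀ t t' : ℤ, t ≤ t' → P t k ≤ P t' k := by
    intro k
    induction k with
    | zero => intro t t' h; rw [hP0, hP0]; exact h
    | succ k ih => intro t t' h; rw [hPs, hPs]; exact hfmono _ (ih t t' h)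
  have hPstep : ∀ t k, P (t + 1) k ≤ P t k + 1 := by
    intro t k
    induction k with
    | zero => rw [hP0, hP0]
    | succ k ih =>
      rw [hPs, hPs]
      exact (hfmono _ ih).trans (hfstep _ _)
  have hPeq : ∀ (t t' : ℤ) (k l : ℕ), P t k = P t' k → P t (k + l) = P t' (k + l) := by
    intro t t' k l h
    induction l with
    | zero => simpa using h
    | succ l ih => rw [show k + (l+1) = (k+l) + 1 by ring, hPs, hPs, ih]
  have hchain : ∀ m : Fin d → ℤ, (∀ j, m j = f j (m (j - 1))) →
      ∀ k : ℕ, m ((k : ℕ) : Fin d) = P (m 0) k := by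
    intro m hm k
    induction k with
    | zero => rw [hP0, Nat.cast_zero]
    | succ k ih =>
      have hcast : ((k + 1 : ℕ) : Fin d) = ((k : ℕ) : Fin d) + 1 := by push_cast; ring
      have harg : ((k + 1 : ℕ) : Fin d) - 1 = ((k : ℕ) : Fin d) := by
        rw [hcast]; exact add_sub_cancel_right _ _
      rw [hPs, ← ih, hm (((k + 1 : ℕ) : Fin d)), harg]
  have hSfix : ∀ m : Fin d → ℤ, (∀ j, m j = f j (m (j - 1))) → P (m 0) d = m 0 := by
    intro m hm
    have h := hchain m hm d
    rw [Fin.natCast_self] at h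
    exact h.symm
  have hSeq : ∀ m : Fin d → ℤ, (∀ j, m j = f j (m (j - 1))) →
      ∀ j : Fin d, m j = P (m 0) j.val := by
    intro m hm j
    have h := hchain m hm j.val
    rwa [Fin.cast_val_eq_self] at h
  have hfix_chain : ∀ t : ℤ, P t d = t →
      ∀ j : Fin d, P t j.val = f j (P t (j - 1).val) := by
    intro t ht j
    rcases Nat.eq_zero_or_pos j.val with hj | hj
    · have hj0 : j = 0 := Fin.ext hj
      subst hj0
      obtain ⟨e, he⟩ : ∃ e, d = e + 1 := ⟨d - 1, by have := NeZero.ne d; omega⟩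
      have h1 : P t d = f ((e + 1 : ℕ) : Fin d) (P t e) :=
        (congrArg (P t) he).trans (hPs t e)
      have h2 : ((e + 1 : ℕ) : Fin d) = 0 := by rw [← he]; exact Fin.natCast_self d
      have h2' : ((e : ℕ) : Fin d) + 1 = 0 := by push_cast at h2; exact h2
      have h3 : ((e : ℕ) : Fin d) = 0 - 1 := by
        rw [← h2']; exact (add_sub_cancel_right _ _).symm
      have h4 : ((0 : Fin d) - 1).val = e := by
        rw [← h3, Fin.val_natCast, Nat.mod_eq_of_lt (by omega)]
      rw [Fin.val_zero, h4, hP0, ← h2, ← h1]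
      exact ht.symm
    · obtain ⟨k, hk⟩ : ∃ k, j.val = k + 1 := ⟨j.val - 1, by omega⟩
      have hkd : k + 1 < d := by have := j.isLt; omega
      have hjcast : ((k + 1 : ℕ) : Fin d) = j := by
        rw [← hk]; exact Fin.cast_val_eq_self j
      have h5 : j - 1 = ((k : ℕ) : Fin d) := by
        rw [← hjcast]; push_cast; exact add_sub_cancel_right _ _
      have h4 : (j - 1).val = k := by
        rw [h5, Fin.val_natCast, Nat.mod_eq_of_lt (by omega)]
      rw [hk, h4, hPs, hjcast]
  -- quantitative bounds
  set C : ℝ := (∑ j : Fin d, |x j|) + 1 with hC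
  have hC1 : 1 ≤ C := by
    have : (0:ℝ) ≤ ∑ j : Fin d, |x j| := Finset.sum_nonneg fun j _ => abs_nonneg _
    rw [hC]; linarith
  have hCx : ∀ j, |x j| ≤ C - 1 := by
    intro j
    have : |x j| ≤ ∑ i : Fin d, |x i| :=
      Finset.single_le_sum (fun i _ => abs_nonneg (x i)) (Finset.mem_univ j)
    rw [hC]; linarith
  clear_value C
  set q : ℕ → ℝ := fun k => ∏ i ∈ Finset.range k, δ ((i + 1 : ℕ) : Fin d) with hq
  have hqpos : ∀ k, 0 < q k := by
    intro k
    exact Finset.prod_pos fun i _ => (hδ _).1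
  have hqle1 : ∀ k, q k ≤ 1 := by
    intro k
    apply Finset.prod_le_one (fun i _ => (hδ _).1.le) (fun i _ => (hδ _).2.le)
  have hq0 : q 0 = 1 := by simp [hq]
  have hqs : ∀ k, q (k + 1) = q k * δ ((k + 1 : ℕ) : Fin d) := by
    intro k; rw [hq]; exact Finset.prod_range_succ _ _
  clear_value q
  have hqd : q d < 1 := by
    obtain ⟨e, he⟩ : ∃ e, d = e + 1 := ⟨d - 1, by have := NeZero.ne d; omega⟩
    rw [he, hqs]
    calc q e * δ ((e + 1 : ℕ) : Fin d) ≤ 1 * δ ((e + 1 : ℕ) : Fin d) :=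
          mul_le_mul_of_nonneg_right (hqle1 e) (hδ _).1.le
      _ < 1 := by rw [one_mul]; exact (hδ _).2
  have hPbound : ∀ (t : ℤ) (k : ℕ), |(P t k : ℝ) - q k * (t : ℝ)| ≤ (k : ℝ) * C := by
    intro t k
    induction k with
    | zero => rw [hP0, hq0]; simp
    | succ k ih =>
      set j' := ((k + 1 : ℕ) : Fin d) with hj'
      clear_value j'
      have ih' := abs_le.1 ih
      have hxj := abs_le.1 (hCx j')
      have hlb := hflb j' (P t k)
      have hub := hfub j' (P t k)
      have hkC : (0:ℝ) ≤ (k : ℝ) * C := by positivity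
      have hd1 : 0 < δ j' := (hδ j').1
      have hd2 : δ j' < 1 := (hδ j').2
      have h1 : δ j' * ((P t k : ℝ) - q k * t) ≤ δ j' * ((k:ℝ) * C) :=
        mul_le_mul_of_nonneg_left ih'.2 hd1.le
      have h2 : -(δ j' * ((k:ℝ) * C)) ≤ δ j' * ((P t k : ℝ) - q k * t) := by
        have h := mul_le_mul_of_nonneg_left ih'.1 hd1.le
        nlinarith [h]
      have h3 : δ j' * ((k:ℝ) * C) ≤ (k:ℝ) * C := by nlinarith
      have hexp : q (k+1) * (t : ℝ) = δ j' * (q k * t) := by rw [hqs, ← hj']; ring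
      have hcast : ((k + 1 : ℕ) : ℝ) * C = (k : ℝ) * C + C := by push_cast; ring
      rw [hPs, ← hj', abs_le, hcast]
      have hPP : (f j' (P t k) : ℝ) - q (k+1) * t
          = ((f j' (P t k) : ℝ) - (x j' + δ j' * (P t k : ℝ) + 1/2))
            + (x j' + 1/2) + δ j' * ((P t k : ℝ) - q k * t) := by
        rw [hexp]; ring
      constructor <;> rw [hPP] <;> linarith [hxj.1, hxj.2, ih'.1, ih'.2]
  -- fixed point existence for F := fun t => P t d
  have hgstep : ∀ t : ℤ, (P t d - t) - 1 ≤ P (t+1) d - (t+1) := by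
    intro t
    have := hPmono d t (t+1) (by omega)
    omega
  have hFub : ∀ t : ℤ, (P t d : ℝ) ≤ q d * t + d * C := by
    intro t
    have := (abs_le.1 (hPbound t d)).2
    linarith
  have hFlb : ∀ t : ℤ, q d * t - d * C ≤ (P t d : ℝ) := by
    intro t
    have := (abs_le.1 (hPbound t d)).1
    linarith
  have hden : 0 < 1 - q d := by linarith
  have hdC : (0:ℝ) ≤ (d : ℝ) * C := by positivity
  set a : ℤ := ⌊-((d : ℝ) * C) / (1 - q d)⌋ with ha
  set b : ℤ := ⌈((d : ℝ) * C) / (1 - q d)⌉ with hb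
  have hga : a ≤ P a d := by
    have h1 : (a : ℝ) ≤ -((d : ℝ) * C) / (1 - q d) := Int.floor_le _
    have h2 : (1 - q d) * (a : ℝ) ≤ -((d:ℝ) * C) := by
      calc (1 - q d) * (a : ℝ) ≤ (1 - q d) * (-((d : ℝ) * C) / (1 - q d)) :=
            mul_le_mul_of_nonneg_left h1 hden.le
        _ = -((d:ℝ) * C) := by rw [mul_comm]; exact div_mul_cancel₀ _ (ne_of_gt hden)
    have h4 : (1 - q d) * (a : ℝ) = a - q d * a := by ring
    have h5 : (a : ℝ) ≤ (P a d : ℝ) := by linarith [hFlb a]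
    exact_mod_cast h5
  have hgb : P b d ≤ b := by
    have h1 : ((d : ℝ) * C) / (1 - q d) ≤ (b : ℝ) := Int.le_ceil _
    have h2 : (d:ℝ) * C ≤ (1 - q d) * (b : ℝ) := by
      calc (d:ℝ) * C = (1 - q d) * (((d : ℝ) * C) / (1 - q d)) := by
            rw [mul_comm (1 - q d), div_mul_cancel₀ _ (ne_of_gt hden)]
        _ ≤ (1 - q d) * (b : ℝ) := mul_le_mul_of_nonneg_left h1 hden.le
    have h4 : (1 - q d) * (b : ℝ) = b - q d * b := by ring
    have h5 : (P b d : ℝ) ≤ (b : ℝ) := by linarith [hFub b]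
    exact_mod_cast h5
  have hab : a ≤ b := by
    have h0 : -((d : ℝ) * C) / (1 - q d) ≤ 0 := div_nonpos_of_nonpos_of_nonneg (by linarith) hden.le
    have h1 : (a : ℝ) ≤ 0 := (Int.floor_le _).trans h0
    have h3 : (0:ℝ) ≤ ((d : ℝ) * C) / (1 - q d) := div_nonneg hdC hden.le
    have h2 : (0 : ℝ) ≤ b := h3.trans (Int.le_ceil _)
    exact_mod_cast h1.trans h2
  obtain ⟨c0, hc0⟩ : ∃ c, (fun t => P t d - t) c = 0 := by
    refine ncube_ivt _ (fun t => hgstep t) (b - a).toNat a (by omega) ?_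
    have h : a + ((b - a).toNat : ℤ) = b := by omega
    rw [h]
    omega
  have hc0' : P c0 d - c0 = 0 := hc0
  obtain ⟨tmax, htfix, htmax⟩ : ∃ tmax, P tmax d = tmax ∧ ∀ z : ℤ, P z d = z → z ≤ tmax := by
    obtain ⟨ub, h1, h2⟩ := Int.exists_greatest_of_bdd (P := fun t => P t d = t)
      ⟨b, fun z hz => by
        have h6 : (z : ℝ) ≤ q d * z + d * C := by
          have := hFub z
          rw [hz] at this
          exact this
        have h4 : (1 - q d) * (z : ℝ) = z - q d * z := by ring
        have h7 : (1 - q d) * (z : ℝ) ≤ (d:ℝ) * C := by linarith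
        have hzr : (z : ℝ) ≤ ((d : ℝ) * C) / (1 - q d) := by
          rw [le_div_iff₀ hden]
          linarith [h7, (by ring : (z:ℝ) * (1 - q d) = (1 - q d) * z)]
        have h8 : (z:ℝ) ≤ (b:ℝ) := hzr.trans (Int.le_ceil _)
        exact_mod_cast h8⟩
      ⟨c0, by omega⟩
    exact ⟨ub, h1, h2⟩
  have hganti : Antitone (fun t => P t d - t) := by
    apply antitone_int_of_succ_le
    intro n
    show P (n+1) d - (n+1) ≤ P n d - n
    have := hPstep n d
    omega
  refine ⟨fun j => P tmax j.val, ?_⟩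
  intro m
  set M : Fin d → ℤ := fun j => P tmax j.val with hM
  have hMS : ∀ j, M j = f j (M (j - 1)) := fun j => hfix_chain tmax htfix j
  have hM0 : M 0 = tmax := by
    show P tmax (0 : Fin d).val = tmax
    rw [Fin.val_zero, hP0]
  have hQiff : (∀ j, -(1/2 : ℝ) ≤ x j - ((m j : ℝ) - δ j * (m (j - 1) : ℝ)) ∧
          x j - ((m j : ℝ) - δ j * (m (j - 1) : ℝ)) ≤ 1/2) ↔ (∀ j, m j = f j (m (j - 1))) :=
    forall_congr' fun j => hQc j (m (j-1)) (m j)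
  constructor
  · rintro ⟨hQm, hRm⟩
    have hS : ∀ j, m j = f j (m (j - 1)) := hQiff.1 hQm
    have hS1 : ¬ (∀ j, m j + 1 = f j (m (j - 1) + 1)) := by
      intro hcon
      apply hRm
      intro j
      have h1 := (hQc j (m (j-1)) (m j)).2 (hS j)
      have h2 := (hQc j (m (j-1) + 1) (m j + 1)).2 (hcon j)
      push_cast at h1 h2 ⊢
      constructor <;> nlinarith [(hδ j).1, (hδ j).2]
    have ht : P (m 0) d = m 0 := hSfix m hS
    have htle : m 0 ≤ tmax := htmax _ ht
    rcases eq_or_lt_of_le htle with he | hlt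
    · funext j
      rw [hSeq m hS j, he]
    · exfalso
      have hfix1 : P (m 0 + 1) d = m 0 + 1 := by
        have h1 : P (m 0 + 1) d - (m 0 + 1) ≤ P (m 0) d - m 0 := hganti (by omega)
        have h2 : P tmax d - tmax ≤ P (m 0 + 1) d - (m 0 + 1) := hganti (by omega)
        rw [ht] at h1
        rw [htfix] at h2
        omega
      have hL6 : ∀ k : ℕ, k ≤ d → P (m 0 + 1) k = P (m 0) k + 1 := by
        intro k hk
        by_contra hne
        have h1 : P (m 0) k ≤ P (m 0 + 1) k := hPmono k _ _ (by omega)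
        have h2 : P (m 0 + 1) k ≤ P (m 0) k + 1 := hPstep _ k
        have heq : P (m 0 + 1) k = P (m 0) k := by omega
        have h9 := hPeq (m 0 + 1) (m 0) k (d - k) heq
        rw [Nat.add_sub_cancel' hk] at h9
        rw [hfix1, ht] at h9
        omega
      apply hS1
      intro j
      have e1 : m j = P (m 0) j.val := hSeq m hS j
      have e2 : m (j - 1) = P (m 0) (j - 1).val := hSeq m hS (j - 1)
      have e3 : P (m 0 + 1) j.val = P (m 0) j.val + 1 := hL6 j.val j.isLt.le
      have e4 : P (m 0 + 1) (j - 1).val = P (m 0) (j - 1).val + 1 := hL6 (j-1).val (j-1).isLt.le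
      have h9 := hfix_chain (m 0 + 1) hfix1 j
      rw [e3, e4] at h9
      rw [e1, e2, h9]
  · rintro rfl
    refine ⟨hQiff.2 hMS, ?_⟩
    intro hR
    have hS1 : ∀ j, M j + 1 = f j (M (j - 1) + 1) := by
      intro j
      apply (hQc j (M (j-1) + 1) (M j + 1)).1
      have h1 := (hQc j (M (j-1)) (M j)).2 (hMS j)
      have h2 := hR j
      push_cast at h1 h2 ⊢
      constructor <;> nlinarith [(hδ j).1, (hδ j).2]
    have hfix1 : P (M 0 + 1) d = M 0 + 1 := by
      have := hSfix (fun j => M j + 1) (fun j => hS1 j)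
      simpa using this
    have := htmax _ hfix1
    omega


lemma ncube_hyperplane {d : ℕ} [NeZero d] (j : Fin d) (c : ℝ) :
    volume {x : Fin d → ℝ | x j = c} = 0 := by
  have h : {x : Fin d → ℝ | x j = c}
      = Set.pi Set.univ (fun i => if i = j then ({c} : Set ℝ) else Set.univ) := by
    ext x
    simp only [Set.mem_setOf_eq, Set.mem_pi, Set.mem_univ, true_implies]
    constructor
    · intro h i
      by_cases hi : i = j
      · subst hi; simp [h]
      · simp [hi]
    · intro h
      have := h j
      simpa using this
  rw [h, volume_pi_pi]
  exact Finset.prod_eq_zero (Finset.mem_univ j) (by simp)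

lemma ncube_mulVec {d : ℕ} [NeZero d] (δ : Fin d → ℝ) (A : Matrix (Fin d) (Fin d) ℝ)
    (hA : ∀ i j, A i j = (if j = i then (1 : ℝ) else 0) - (if j = i + 1 then δ (i + 1) else 0))
    (v : Fin d → ℝ) (j : Fin d) :
    A.transpose.mulVec v j = v j - δ j * v (j - 1) := by
  classical
  simp only [Matrix.mulVec, dotProduct, Matrix.transpose_apply, hA]
  have hsplit : ∀ i : Fin d,
      ((if j = i then (1:ℝ) else 0) - (if j = i + 1 then δ (i+1) else 0)) * v i
      = (if i = j then v i else 0) - (if i = j - 1 then δ (i+1) * v i else 0) := by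
    intro i
    have h1 : (j = i) ↔ (i = j) := eq_comm
    have h2 : (j = i + 1) ↔ (i = j - 1) := by
      constructor
      · intro h; rw [h]; exact (add_sub_cancel_right _ _).symm
      · intro h; rw [h, sub_add_cancel]
    rw [if_congr h1 rfl rfl, if_congr h2 rfl rfl]
    split_ifs <;> ring
  rw [Finset.sum_congr rfl (fun i _ => hsplit i), Finset.sum_sub_distrib,
    Finset.sum_ite_eq' Finset.univ j v,
    Finset.sum_ite_eq' Finset.univ (j - 1) (fun i => δ (i + 1) * v i)]
  simp [sub_add_cancel]


theorem notched_cube_lattice_tiling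
    {d : ℕ} [NeZero d] (δ : Fin d → ℝ) (hδ : ∀ j, 0 < δ j ∧ δ j < 1)
    (A : Matrix (Fin d) (Fin d) ℝ)
    (hA : ∀ i j, A i j = (if j = i then (1 : ℝ) else 0) - (if j = i + 1 then δ (i + 1) else 0))
    (Q : Set (Fin d → ℝ)) (hQ : Q = Set.Icc (fun _ => -(1/2 : ℝ)) (fun _ => (1/2 : ℝ)))
    (R : Set (Fin d → ℝ)) (hR : R = Set.Icc (fun j => (1/2 : ℝ) - δ j) (fun _ => (1/2 : ℝ)))
    (N : Set (Fin d → ℝ)) (hN : N = Q \ R) :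
    ∀ᵐ x : Fin d → ℝ ∂volume,
      ∑' m : Fin d → ℤ,
        Set.indicator N (fun _ => (1 : ℝ)) (x - A.transpose.mulVec (fun j => (m j : ℝ))) = 1 := by
  classical
  have hbad : volume (⋃ (j : Fin d) (n : ℤ) (k : ℤ),
      {x : Fin d → ℝ | x j + δ j * (n : ℝ) + 1/2 = (k : ℝ)}) = 0 := by
    refine measure_iUnion_null fun j => measure_iUnion_null fun n =>
      measure_iUnion_null fun k => ?_
    have h : {x : Fin d → ℝ | x j + δ j * (n:ℝ) + 1/2 = (k:ℝ)}
        = {x : Fin d → ℝ | x j = (k:ℝ) - δ j * n - 1/2} := by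
      ext y
      constructor <;> intro h <;> simp only [Set.mem_setOf_eq] at * <;> linarith
    rw [h]
    exact ncube_hyperplane j _
  filter_upwards [measure_eq_zero_iff_ae_notMem.1 hbad] with x hxB
  have hx : ∀ (j : Fin d) (n k : ℤ), x j + δ j * (n : ℝ) + 1/2 ≠ (k : ℝ) := by
    intro j n k h
    exact hxB (Set.mem_iUnion.2 ⟨j, Set.mem_iUnion.2 ⟨n, Set.mem_iUnion.2 ⟨k, h⟩⟩⟩)
  obtain ⟨M, hM⟩ := ncube_key δ hδ x hx
  have hterm : ∀ m : Fin d → ℤ,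
      Set.indicator N (fun _ => (1:ℝ)) (x - A.transpose.mulVec (fun j => (m j : ℝ)))
      = if m = M then 1 else 0 := by
    intro m
    have hy : ∀ j, (x - A.transpose.mulVec fun j => (m j : ℝ)) j
        = x j - ((m j : ℝ) - δ j * (m (j-1) : ℝ)) := by
      intro j
      rw [Pi.sub_apply, ncube_mulVec δ A hA]
    have hmem : (x - A.transpose.mulVec fun j => (m j : ℝ)) ∈ N ↔ m = M := by
      rw [hN, hQ, hR, Set.mem_diff, Set.mem_Icc, Set.mem_Icc, ← hM m]
      simp only [Pi.le_def, hy]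
      constructor
      · rintro ⟨⟨h1, h2⟩, h3⟩
        exact ⟨fun j => ⟨h1 j, h2 j⟩, fun hr => h3 ⟨fun j => (hr j).1, fun j => (hr j).2⟩⟩
      · rintro ⟨h1, h2⟩
        exact ⟨⟨fun j => (h1 j).1, fun j => (h1 j).2⟩, fun hr => h2 fun j => ⟨hr.1 j, hr.2 j⟩⟩
    by_cases hmM : m = M
    · rw [if_pos hmM, Set.indicator_of_mem (hmem.2 hmM)]
    · rw [if_neg hmM, Set.indicator_of_notMem (fun h => hmM (hmem.1 h))]
  rw [tsum_congr hterm]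
  exact tsum_ite_eq M 1
end

section
/- There exist three lattices Λ₀, Λ₁, Λ₂ in ℝ² of the same covolume which admit no common fundamental domain: specifically, for Λ₀ = (2ℤ)×ℤ, Λ₁ = ℤ×(2ℤ), and Λ₂ = {(k,l) ∈ ℤ² : k ≡ l (mod 2)}, there is no set Ω ⊆ ℝ² such that for almost every x ∈ ℝ², the coset x + Λ_i contains exactly one point of Ω for each i = 0, 1, 2. -/
/-!
Let `D = 2ℤ × 2ℤ`. Each `Λᵢ` is the disjoint union `D ∪ (vᵢ + D)` with `v₀ = (0,1)`, `v₁ = (1,0)`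
and `v₂ = (1,1) = v₀ + v₁`. If `Ω` meets `x + Λᵢ` in exactly one point, then `Ω` meets exactly one
of the cosets `x + D`, `x + vᵢ + D`. So whether `Ω` meets `y + D` changes once along `v₂` but twice
along `v₀` then `v₁`, which is absurd at any point `x` where `Ω` tiles for `Λ₀`, `Λ₂` at `x` and
for `Λ₁` at `x + v₀`; by translation invariance of Lebesgue measure, almost every `x` is such a point.
-/

open MeasureTheory Pointwise

section CommonTile

variable {G : Type*} [AddCommGroup G]

def MeetsCoset (Ω D : Set G) (x : G) : Prop := ∃ p ∈ Ω, p - x ∈ D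

lemma sub_mem_vadd_set_iff {D : Set G} {p x v : G} : p - x ∈ v +ᵥ D ↔ p - (x + v) ∈ D := by
  rw [Set.mem_vadd_set_iff_neg_vadd_mem, vadd_eq_add, neg_add_eq_sub, sub_sub]

lemma meetsCoset_iff_not_add_of_existsUnique {Ω D : Set G} {v x : G}
    (hdisj : Disjoint D (v +ᵥ D)) (h : ∃! p, p ∈ Ω ∧ p - x ∈ D ∪ (v +ᵥ D)) :
    MeetsCoset Ω D x ↔ ¬ MeetsCoset Ω D (x + v) := by
  obtain ⟨p, ⟨hpΩ, hpΛ⟩, huniq⟩ := h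
  constructor
  · rintro ⟨q, hqΩ, hqD⟩ ⟨r, hrΩ, hrD⟩
    rw [← sub_mem_vadd_set_iff] at hrD
    obtain rfl : q = p := huniq q ⟨hqΩ, .inl hqD⟩
    obtain rfl : r = q := huniq r ⟨hrΩ, .inr hrD⟩
    exact Set.disjoint_left.1 hdisj hqD hrD
  · intro hnot
    rcases hpΛ with hpD | hpD
    · exact ⟨p, hpΩ, hpD⟩
    · exact (hnot ⟨p, hpΩ, sub_mem_vadd_set_iff.1 hpD⟩).elim

theorem not_existsUnique_of_disjoint_vadd {Ω D : Set G} {u v w x : G} (huv : u + v = w)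
    (hu : Disjoint D (u +ᵥ D)) (hv : Disjoint D (v +ᵥ D)) (hw : Disjoint D (w +ᵥ D))
    (hu_tile : ∃! p, p ∈ Ω ∧ p - x ∈ D ∪ (u +ᵥ D))
    (hv_tile : ∃! p, p ∈ Ω ∧ p - (x + u) ∈ D ∪ (v +ᵥ D))
    (hw_tile : ∃! p, p ∈ Ω ∧ p - x ∈ D ∪ (w +ᵥ D)) : False := by
  have hx := meetsCoset_iff_not_add_of_existsUnique hu hu_tile
  have hxu := meetsCoset_iff_not_add_of_existsUnique hv hv_tile
  have hx' := meetsCoset_iff_not_add_of_existsUnique hw hw_tile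
  rw [add_assoc, huv] at hxu
  tauto

end CommonTile

lemma MeasureTheory.ae_exists_and_add_right {G : Type*} [MeasurableSpace G] [AddGroup G]
    [MeasurableAdd G] {μ : Measure G} [μ.IsAddRightInvariant] [NeZero μ] {P : G → Prop}
    (h : ∀ᵐ x ∂μ, P x) (u : G) : ∃ x, P x ∧ P (x + u) :=
  (h.and ((measurePreserving_add_right μ u).quasiMeasurePreserving.ae h)).exists

section EvenLattice

def intPoint : ℤ × ℤ →+ ℝ × ℝ := (Int.castAddHom ℝ).prodMap (Int.castAddHom ℝ)

lemma intPoint_injective : Function.Injective intPoint := fun a b h => by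
  simpa [intPoint, Prod.ext_iff] using h

def evenLattice : Set (ℤ × ℤ) := {q | 2 ∣ q.1 ∧ 2 ∣ q.2}

def evenPoints : Set (ℝ × ℝ) := intPoint '' evenLattice

lemma disjoint_evenPoints_vadd {v : ℤ × ℤ} (hv : v ∉ evenLattice) :
    Disjoint evenPoints (intPoint v +ᵥ evenPoints) := by
  rw [evenPoints, ← Set.image_vadd_distrib, Set.disjoint_image_iff intPoint_injective,
    Set.disjoint_left]
  intro q hq hq'
  simp only [evenLattice, Set.mem_vadd_set_iff_neg_vadd_mem, Set.mem_ofPred_eq, vadd_eq_add,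
    Prod.fst_add, Prod.snd_add, Prod.fst_neg, Prod.snd_neg] at hq hq' hv
  omega

lemma mem_evenPoints_union_vadd {v : ℤ × ℤ} {p : ℝ × ℝ} :
    p ∈ evenPoints ∪ (intPoint v +ᵥ evenPoints) ↔
      ∃ k l : ℤ, ((2 ∣ k ∧ 2 ∣ l) ∨ (2 ∣ k - v.1 ∧ 2 ∣ l - v.2)) ∧ p = ((k : ℝ), (l : ℝ)) := by
  rw [evenPoints, ← Set.image_vadd_distrib, ← Set.image_union]
  simp [evenLattice, intPoint, Set.mem_vadd_set_iff_neg_vadd_mem, neg_add_eq_sub, eq_comm]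

lemma setOf_two_mul_fst_eq_union_vadd :
    {p : ℝ × ℝ | ∃ k l : ℤ, p = (((2 * k : ℤ) : ℝ), ((l : ℤ) : ℝ))} =
      evenPoints ∪ (intPoint (0, 1) +ᵥ evenPoints) := by
  ext p
  rw [mem_evenPoints_union_vadd]
  constructor
  · rintro ⟨k, l, rfl⟩
    exact ⟨2 * k, l, by omega, rfl⟩
  · rintro ⟨k, l, h, rfl⟩
    obtain ⟨m, rfl⟩ : 2 ∣ k := by omega
    exact ⟨m, l, rfl⟩

lemma setOf_two_mul_snd_eq_union_vadd :
    {p : ℝ × ℝ | ∃ k l : ℤ, p = (((k : ℤ) : ℝ), ((2 * l : ℤ) : ℝ))} =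
      evenPoints ∪ (intPoint (1, 0) +ᵥ evenPoints) := by
  ext p
  rw [mem_evenPoints_union_vadd]
  constructor
  · rintro ⟨k, l, rfl⟩
    exact ⟨k, 2 * l, by omega, rfl⟩
  · rintro ⟨k, l, h, rfl⟩
    obtain ⟨m, rfl⟩ : 2 ∣ l := by omega
    exact ⟨k, m, rfl⟩

lemma setOf_emod_two_eq_eq_union_vadd :
    {p : ℝ × ℝ | ∃ k l : ℤ, k % 2 = l % 2 ∧ p = (((k : ℤ) : ℝ), ((l : ℤ) : ℝ))} =
      evenPoints ∪ (intPoint (1, 1) +ᵥ evenPoints) := by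
  ext p
  rw [mem_evenPoints_union_vadd]
  exact exists₂_congr fun k l => and_congr_left fun _ => by omega

end EvenLattice

theorem three_lattices_no_common_tile :
    let Λ0 : Set (ℝ × ℝ) := {p | ∃ k l : ℤ, p = (((2 * k : ℤ) : ℝ), ((l : ℤ) : ℝ))}
    let Λ1 : Set (ℝ × ℝ) := {p | ∃ k l : ℤ, p = (((k : ℤ) : ℝ), ((2 * l : ℤ) : ℝ))}
    let Λ2 : Set (ℝ × ℝ) := {p | ∃ k l : ℤ, k % 2 = l % 2 ∧ p = (((k : ℤ) : ℝ), ((l : ℤ) : ℝ))}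
    ¬ ∃ Ω : Set (ℝ × ℝ), ∀ᵐ x : ℝ × ℝ ∂volume,
        (∃! p, p ∈ Ω ∧ p - x ∈ Λ0) ∧ (∃! p, p ∈ Ω ∧ p - x ∈ Λ1) ∧
          (∃! p, p ∈ Ω ∧ p - x ∈ Λ2) := by
  intro Λ0 Λ1 Λ2
  rintro ⟨Ω, hΩ⟩
  obtain ⟨x, ⟨h0, -, h2⟩, -, h1, -⟩ := ae_exists_and_add_right hΩ (intPoint (0, 1))
  rw [show Λ0 = _ from setOf_two_mul_fst_eq_union_vadd] at h0
  rw [show Λ1 = _ from setOf_two_mul_snd_eq_union_vadd] at h1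
  rw [show Λ2 = _ from setOf_emod_two_eq_eq_union_vadd] at h2
  refine not_existsUnique_of_disjoint_vadd (by rw [← map_add]; rfl) ?_ ?_ ?_ h0 h1 h2 <;>
    exact disjoint_evenPoints_vadd (by simp [evenLattice])
end

section
/- If f, g ≥ 0 are integrable functions on ℝ^d with ∫f = ∫g = 1, and Λ ⊆ ℝ^d is a countable set such that both ∑_{λ∈Λ} f(x−λ) ≤ 1 and ∑_{λ∈Λ} g(x−λ) ≤ 1 hold almost everywhere (both are packings at level 1), then ∑_{λ∈Λ} f(x−λ) = 1 a.e. if and only if ∑_{λ∈Λ} g(x−λ) = 1 a.e. (f tiles with Λ iff g tiles with Λ). -/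
set_option maxHeartbeats 1000000


open MeasureTheory
open scoped ENNReal NNReal

namespace TilingFromPackingAux

variable {d : ℕ}

local notation "Vol" => (volume : Measure (EuclideanSpace ℝ (Fin d)))

/-- One direction: if `f` tiles then `g` tiles. -/
theorem key (f g : EuclideanSpace ℝ (Fin d) → ℝ)
    (hfi : Integrable f) (hgi : Integrable g) (hf0 : 0 ≤ f) (hg0 : 0 ≤ g)
    (hfint : ∫ x, f x = 1) (hgint : ∫ x, g x = 1)
    (Λ : Set (EuclideanSpace ℝ (Fin d))) (hΛ : Λ.Countable)
    (hgpack : ∀ᵐ x : EuclideanSpace ℝ (Fin d) ∂volume, ∑' p : Λ, g (x - p) ≤ 1)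
    (hftile : ∀ᵐ x : EuclideanSpace ℝ (Fin d) ∂volume, ∑' p : Λ, f (x - p) = 1) :
    ∀ᵐ x : EuclideanSpace ℝ (Fin d) ∂volume, ∑' p : Λ, g (x - p) = 1 := by
  haveI : Countable ↥Λ := hΛ.to_subtype
  set F : EuclideanSpace ℝ (Fin d) → ℝ≥0∞ :=
    fun x => ∑' p : Λ, ENNReal.ofReal (f (x - ↑p)) with hFdef
  set G : EuclideanSpace ℝ (Fin d) → ℝ≥0∞ :=
    fun x => ∑' p : Λ, ENNReal.ofReal (g (x - ↑p)) with hGdef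
  have hfm : AEMeasurable (fun x => ENNReal.ofReal (f x)) Vol :=
    hfi.aestronglyMeasurable.aemeasurable.ennreal_ofReal
  have hgm : AEMeasurable (fun x => ENNReal.ofReal (g x)) Vol :=
    hgi.aestronglyMeasurable.aemeasurable.ennreal_ofReal
  -- translates are a.e. measurable
  have hfmt : ∀ a : EuclideanSpace ℝ (Fin d),
      AEMeasurable (fun x => ENNReal.ofReal (f (x - a))) Vol := fun a =>
    hfm.comp_quasiMeasurePreserving
      (measurePreserving_sub_right Vol a).quasiMeasurePreserving
  have hgmt : ∀ a : EuclideanSpace ℝ (Fin d),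
      AEMeasurable (fun x => ENNReal.ofReal (g (x - a))) Vol := fun a =>
    hgm.comp_quasiMeasurePreserving
      (measurePreserving_sub_right Vol a).quasiMeasurePreserving
  have hgml : ∀ a : EuclideanSpace ℝ (Fin d),
      AEMeasurable (fun x => ENNReal.ofReal (g (a - x))) Vol := fun a =>
    hgm.comp_quasiMeasurePreserving
      (Measure.measurePreserving_sub_left Vol a).quasiMeasurePreserving
  have hFm : AEMeasurable F Vol := AEMeasurable.ennreal_tsum fun p => hfmt p
  have hGm : AEMeasurable G Vol := AEMeasurable.ennreal_tsum fun p => hgmt p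
  -- ∫⁻ of f and g are 1
  have hfl : ∫⁻ y, ENNReal.ofReal (f y) = 1 := by
    rw [← ofReal_integral_eq_lintegral_ofReal hfi (Filter.Eventually.of_forall hf0), hfint,
      ENNReal.ofReal_one]
  have hgl : ∫⁻ y, ENNReal.ofReal (g y) = 1 := by
    rw [← ofReal_integral_eq_lintegral_ofReal hgi (Filter.Eventually.of_forall hg0), hgint,
      ENNReal.ofReal_one]
  -- tiling hypothesis in ℝ≥0∞ form
  have hF1 : F =ᵐ[Vol] fun _ => 1 := by
    filter_upwards [hftile] with x hx
    have hsum : Summable fun p : Λ => f (x - ↑p) := by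
      by_contra h
      rw [tsum_eq_zero_of_not_summable h] at hx
      norm_num at hx
    have : F x = ENNReal.ofReal (∑' p : Λ, f (x - ↑p)) :=
      (ENNReal.ofReal_tsum_of_nonneg (fun p => hf0 _) hsum).symm
    rw [this, hx, ENNReal.ofReal_one]
  -- the convolution-type kernel
  set C : EuclideanSpace ℝ (Fin d) → ℝ≥0∞ :=
    fun z => ∫⁻ y, ENNReal.ofReal (f y) * ENNReal.ofReal (g (z - y)) with hCdef
  -- commutativity of the kernel
  have hC' : ∀ z, ∫⁻ y, ENNReal.ofReal (g y) * ENNReal.ofReal (f (z - y)) = C z := by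
    intro z
    have h := (Measure.measurePreserving_sub_left Vol z).lintegral_comp_emb
      (MeasurableEquiv.subLeft z).measurableEmbedding
      (fun y => ENNReal.ofReal (f y) * ENNReal.ofReal (g (z - y)))
    calc ∫⁻ y, ENNReal.ofReal (g y) * ENNReal.ofReal (f (z - y))
        = ∫⁻ y, ENNReal.ofReal (f (z - y)) * ENNReal.ofReal (g (z - (z - y))) := by
          congr 1; funext y; rw [sub_sub_cancel, mul_comm]
      _ = C z := h
  -- expansion of the two convolutions
  have hTf : ∀ x, ∫⁻ y, ENNReal.ofReal (f y) * G (x - y) = ∑' p : Λ, C (x - ↑p) := by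
    intro x
    have h1 : ∀ y, ENNReal.ofReal (f y) * G (x - y)
        = ∑' p : Λ, ENNReal.ofReal (f y) * ENNReal.ofReal (g ((x - ↑p) - y)) := by
      intro y
      simp only [hGdef]
      rw [← ENNReal.tsum_mul_left]
      exact tsum_congr fun p => by rw [sub_right_comm]
    simp_rw [h1]
    rw [lintegral_tsum (μ := Vol)
      (f := fun (p : ↥Λ) y => ENNReal.ofReal (f y) * ENNReal.ofReal (g (x - ↑p - y)))
      (fun p => hfm.fun_mul (hgml (x - (p : EuclideanSpace ℝ (Fin d)))))]
  have hTg : ∀ x, ∫⁻ y, ENNReal.ofReal (g y) * F (x - y) = ∑' p : Λ, C (x - ↑p) := by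
    intro x
    have h1 : ∀ y, ENNReal.ofReal (g y) * F (x - y)
        = ∑' p : Λ, ENNReal.ofReal (g y) * ENNReal.ofReal (f ((x - ↑p) - y)) := by
      intro y
      simp only [hFdef]
      rw [← ENNReal.tsum_mul_left]
      exact tsum_congr fun p => by rw [sub_right_comm]
    simp_rw [h1]
    rw [lintegral_tsum (μ := Vol)
      (f := fun (p : ↥Λ) y => ENNReal.ofReal (g y) * ENNReal.ofReal (f (x - ↑p - y)))
      (fun p => hgm.fun_mul
        (hfm.comp_quasiMeasurePreserving
          (Measure.measurePreserving_sub_left Vol (x - (p : EuclideanSpace ℝ (Fin d)))).quasiMeasurePreserving))]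
    exact tsum_congr fun p => hC' (x - (p : EuclideanSpace ℝ (Fin d)))
  -- the key identity: (f ⋆ G)(x) = 1 for all x
  have hT1 : ∀ x, ∫⁻ y, ENNReal.ofReal (f y) * G (x - y) = 1 := by
    intro x
    rw [hTf x, ← hTg x]
    have hae : (fun y => F (x - y)) =ᵐ[Vol] fun _ => (1 : ℝ≥0∞) :=
      (Measure.measurePreserving_sub_left Vol x).quasiMeasurePreserving.ae_eq_comp hF1
    calc ∫⁻ y, ENNReal.ofReal (g y) * F (x - y)
        = ∫⁻ y, ENNReal.ofReal (g y) * 1 := by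
          apply lintegral_congr_ae
          filter_upwards [hae] with y hy
          rw [hy]
      _ = 1 := by simp [hgl]
  -- measurability of convolution integrands
  have hmulm : ∀ h : EuclideanSpace ℝ (Fin d) → ℝ≥0∞, AEMeasurable h Vol →
      ∀ x, AEMeasurable (fun y => ENNReal.ofReal (f y) * h (x - y)) Vol := fun h hm x =>
    hfm.fun_mul (hm.comp_quasiMeasurePreserving
      (Measure.measurePreserving_sub_left Vol x).quasiMeasurePreserving)
  -- Tonelli argument: if f ⋆ h = 0 everywhere then h = 0 a.e.
  have tonelli : ∀ h : EuclideanSpace ℝ (Fin d) → ℝ≥0∞, AEMeasurable h Vol →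
      (∀ x, ∫⁻ y, ENNReal.ofReal (f y) * h (x - y) = 0) → ∫⁻ z, h z = 0 := by
    intro h hm hzero
    have hΦ : AEMeasurable
        (Function.uncurry fun x y => ENNReal.ofReal (f y) * h (x - y)) ((volume : Measure (EuclideanSpace ℝ (Fin d))).prod volume) := by
      have h1 : AEMeasurable (fun q : EuclideanSpace ℝ (Fin d) × EuclideanSpace ℝ (Fin d) =>
          ENNReal.ofReal (f q.2)) ((volume : Measure (EuclideanSpace ℝ (Fin d))).prod volume) :=
        hfm.comp_quasiMeasurePreserving Measure.quasiMeasurePreserving_snd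
      have h2 : AEMeasurable (fun q : EuclideanSpace ℝ (Fin d) × EuclideanSpace ℝ (Fin d) =>
          h (q.1 - q.2)) ((volume : Measure (EuclideanSpace ℝ (Fin d))).prod volume) :=
        hm.comp_quasiMeasurePreserving (quasiMeasurePreserving_sub Vol Vol)
      exact h1.fun_mul h2
    have hswap := lintegral_lintegral_swap hΦ
    have hL : ∫⁻ x, ∫⁻ y, ENNReal.ofReal (f y) * h (x - y) ∂Vol ∂Vol = 0 := by
      simp [hzero]
    rw [hL] at hswap
    have hR : ∀ y : EuclideanSpace ℝ (Fin d),
        ∫⁻ x, ENNReal.ofReal (f y) * h (x - y) ∂Vol = ENNReal.ofReal (f y) * ∫⁻ z, h z := by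
      intro y
      rw [lintegral_const_mul' _ _ ENNReal.ofReal_ne_top, lintegral_sub_right_eq_self h y]
    simp_rw [hR] at hswap
    have h5 : ∫⁻ y, ENNReal.ofReal (f y) * ∫⁻ z, h z ∂Vol = 0 := hswap.symm
    rw [lintegral_mul_const'' (∫⁻ z, h z) hfm, hfl, one_mul] at h5
    exact h5
  -- Step: G is finite a.e.
  have hGfin : ∀ᵐ z : EuclideanSpace ℝ (Fin d) ∂volume, G z ≠ ∞ := by
    set w : EuclideanSpace ℝ (Fin d) → ℝ≥0∞ := fun z => if G z = ∞ then 1 else 0 with hwdef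
    have hwm : AEMeasurable w Vol := by
      have hv : Measurable fun a : ℝ≥0∞ => if a = ∞ then (1 : ℝ≥0∞) else 0 :=
        Measurable.ite (measurableSet_eq) measurable_const measurable_const
      exact hv.comp_aemeasurable hGm
    have hw0 : ∀ x, ∫⁻ y, ENNReal.ofReal (f y) * w (x - y) = 0 := by
      intro x
      by_contra hne
      have hle : ∀ y, (∞ : ℝ≥0∞) * (ENNReal.ofReal (f y) * w (x - y))
          ≤ ENNReal.ofReal (f y) * G (x - y) := by
        intro y
        rw [← mul_assoc, mul_comm (∞ : ℝ≥0∞) _, mul_assoc]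
        apply mul_le_mul_right
        rw [hwdef]
        by_cases hc : G (x - y) = ∞
        · simp [hc]
        · simp [hc]
      have : (∞ : ℝ≥0∞) * ∫⁻ y, ENNReal.ofReal (f y) * w (x - y) ≤ 1 := by
        rw [← lintegral_const_mul'' (∞ : ℝ≥0∞) (hmulm w hwm x)]
        rw [← hT1 x]
        exact lintegral_mono hle
      rw [ENNReal.top_mul hne] at this
      exact absurd this (by simp)
    have hw := tonelli w hwm hw0
    rw [lintegral_eq_zero_iff' hwm] at hw
    filter_upwards [hw] with z hz
    intro hc
    rw [hwdef] at hz
    simp only [hc, if_true] at hz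
    exact one_ne_zero hz
  -- a.e. summability and G ≤ 1 a.e.
  have hsummable : ∀ z : EuclideanSpace ℝ (Fin d), G z ≠ ∞ → Summable fun p : Λ => g (z - ↑p) := by
    intro z hz
    have h1 : (fun p : Λ => ENNReal.ofReal (g (z - ↑p)))
        = fun p : Λ => ((Real.toNNReal (g (z - ↑p)) : ℝ≥0) : ℝ≥0∞) := rfl
    rw [hGdef] at hz
    simp only [h1] at hz
    have h2 : Summable fun p : Λ => Real.toNNReal (g (z - ↑p)) :=
      ENNReal.tsum_coe_ne_top_iff_summable.1 hz
    have h3 := NNReal.summable_coe.2 h2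
    have h4 : (fun p : Λ => ((Real.toNNReal (g (z - ↑p)) : ℝ≥0) : ℝ)) = fun p : Λ => g (z - ↑p) :=
      funext fun p => Real.coe_toNNReal _ (hg0 _)
    rwa [h4] at h3
  have hGle1 : ∀ᵐ z : EuclideanSpace ℝ (Fin d) ∂volume, G z ≤ 1 := by
    filter_upwards [hGfin, hgpack] with z h1 h2
    have hs := hsummable z h1
    have : G z = ENNReal.ofReal (∑' p : Λ, g (z - ↑p)) :=
      (ENNReal.ofReal_tsum_of_nonneg (fun p => hg0 _) hs).symm
    rw [this]
    calc ENNReal.ofReal (∑' p : Λ, g (z - ↑p)) ≤ ENNReal.ofReal 1 :=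
          ENNReal.ofReal_le_ofReal h2
      _ = 1 := ENNReal.ofReal_one
  -- the deficiency function
  set u : EuclideanSpace ℝ (Fin d) → ℝ≥0∞ := fun z => 1 - G z with hudef
  have hum : AEMeasurable u Vol := aemeasurable_const.sub hGm
  have hu0 : ∀ x, ∫⁻ y, ENNReal.ofReal (f y) * u (x - y) = 0 := by
    intro x
    have hGu : (fun z => G z + u z) =ᵐ[Vol] fun _ => (1 : ℝ≥0∞) := by
      filter_upwards [hGle1] with z h
      exact add_tsub_cancel_of_le h
    have hae : (fun y => G (x - y) + u (x - y)) =ᵐ[Vol] fun _ => (1 : ℝ≥0∞) :=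
      (Measure.measurePreserving_sub_left Vol x).quasiMeasurePreserving.ae_eq_comp hGu
    have h1 : ∫⁻ y, ENNReal.ofReal (f y) * (G (x - y) + u (x - y)) = 1 := by
      calc ∫⁻ y, ENNReal.ofReal (f y) * (G (x - y) + u (x - y))
          = ∫⁻ y, ENNReal.ofReal (f y) * 1 := by
            apply lintegral_congr_ae
            filter_upwards [hae] with y hy
            rw [hy]
        _ = 1 := by simp [hfl]
    have h2 : ∫⁻ y, ENNReal.ofReal (f y) * (G (x - y) + u (x - y))
        = (∫⁻ y, ENNReal.ofReal (f y) * G (x - y))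
          + ∫⁻ y, ENNReal.ofReal (f y) * u (x - y) := by
      simp_rw [mul_add]
      exact lintegral_add_left' (hmulm G hGm x) _
    rw [h2, hT1 x] at h1
    exact (ENNReal.add_right_inj (a := 1) ENNReal.one_ne_top).1 (h1.trans (add_zero 1).symm)
  have huz := tonelli u hum hu0
  rw [lintegral_eq_zero_iff' hum] at huz
  have hG1 : ∀ᵐ z : EuclideanSpace ℝ (Fin d) ∂volume, G z = 1 := by
    filter_upwards [huz, hGle1] with z h1 h2
    have : 1 ≤ G z := by
      rw [hudef] at h1
      simp only [Pi.zero_apply] at h1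
      exact tsub_eq_zero_iff_le.1 h1
    exact le_antisymm h2 this
  -- conclude
  filter_upwards [hG1] with z hz
  have hfin : G z ≠ ∞ := by rw [hz]; exact ENNReal.one_ne_top
  have hs := hsummable z hfin
  have h1 : ENNReal.ofReal (∑' p : Λ, g (z - ↑p)) = 1 :=
    (ENNReal.ofReal_tsum_of_nonneg (fun p => hg0 _) hs).trans hz
  exact ENNReal.ofReal_eq_one.1 h1

end TilingFromPackingAux

theorem tiling_from_packing_two_tiles
    {d : ℕ} (f g : EuclideanSpace ℝ (Fin d) → ℝ)
    (hfi : Integrable f) (hgi : Integrable g) (hf0 : 0 ≤ f) (hg0 : 0 ≤ g)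
    (hfint : ∫ x, f x = 1) (hgint : ∫ x, g x = 1)
    (Λ : Set (EuclideanSpace ℝ (Fin d))) (hΛ : Λ.Countable)
    (hfpack : ∀ᵐ x : EuclideanSpace ℝ (Fin d) ∂volume, ∑' p : Λ, f (x - p) ≤ 1)
    (hgpack : ∀ᵐ x : EuclideanSpace ℝ (Fin d) ∂volume, ∑' p : Λ, g (x - p) ≤ 1) :
    (∀ᵐ x : EuclideanSpace ℝ (Fin d) ∂volume, ∑' p : Λ, f (x - p) = 1) ↔
      (∀ᵐ x : EuclideanSpace ℝ (Fin d) ∂volume, ∑' p : Λ, g (x - p) = 1) := by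
  constructor
  · intro h
    exact TilingFromPackingAux.key f g hfi hgi hf0 hg0 hfint hgint Λ hΛ hgpack h
  · intro h
    exact TilingFromPackingAux.key g f hgi hfi hg0 hf0 hgint hfint Λ hΛ hfpack h
end

section
/- Intermediate step in the two-tile lemma: if f, g ≥ 0 with ∫f = ∫g = 1, both f + Λ and g + Λ are packings at level 1, and ∑_{λ∈Λ} f(x−λ) = 1 for almost every x in −supp g, then ∑_{λ∈Λ} g(y−λ) = 1 for almost every y in −supp f. -/
/-!
Write `w x = g (-x)`. Translating each term of the Fubini–Tonelli exchange gives
`∫ w(x) ∑_λ f(x - λ) dx = ∫ f(x) ∑_λ w(x + λ) dx`. The tiling hypothesis makes the left side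
`∫ w = 1 = ∫ f`, while the packing of `g` bounds the inner sum on the right by `1`; equality of
the integrals then forces `∑_λ w(x + λ) = 1` for almost every `x` in the support of `f`.
-/

open MeasureTheory
open scoped ENNReal

theorem summable_of_tsum_ofReal_ne_top {ι : Type*} {a : ι → ℝ} (ha : ∀ i, 0 ≤ a i)
    (h : ∑' i, ENNReal.ofReal (a i) ≠ ∞) : Summable a :=
  (ENNReal.summable_toReal h).congr fun i => ENNReal.toReal_ofReal (ha i)

theorem tsum_ofReal_eq_one_iff {ι : Type*} {a : ι → ℝ} (ha : ∀ i, 0 ≤ a i) :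
    ∑' i, ENNReal.ofReal (a i) = 1 ↔ ∑' i, a i = 1 := by
  by_cases hs : Summable a
  · rw [← ENNReal.ofReal_tsum_of_nonneg ha hs, ENNReal.ofReal_eq_one]
  · have htop : ∑' i, ENNReal.ofReal (a i) = ∞ :=
      not_ne_iff.mp fun h => hs (summable_of_tsum_ofReal_ne_top ha h)
    simp [htop, tsum_eq_zero_of_not_summable hs]

theorem tsum_ofReal_le_one {ι : Type*} {a : ι → ℝ} (ha : ∀ i, 0 ≤ a i) (h : ∑' i, a i ≤ 1)
    (hfin : ∑' i, ENNReal.ofReal (a i) ≠ ∞) : ∑' i, ENNReal.ofReal (a i) ≤ 1 := by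
  rw [← ENNReal.ofReal_tsum_of_nonneg ha (summable_of_tsum_ofReal_ne_top ha hfin)]
  exact ENNReal.ofReal_le_one.mpr h

theorem ae_eq_one_of_lintegral_mul_eq_lintegral {α : Type*} [MeasurableSpace α] {μ : Measure α}
    {u w : α → ℝ≥0∞} (hu : AEMeasurable u μ) (hw : AEMeasurable w μ)
    (hw_le : ∀ᵐ x ∂μ, w x ≠ ∞ → w x ≤ 1) (h : ∫⁻ x, u x * w x ∂μ = ∫⁻ x, u x ∂μ)
    (hfin : ∫⁻ x, u x ∂μ ≠ ∞) : ∀ᵐ x ∂μ, u x ≠ 0 → w x = 1 := by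
  have huw_lt : ∀ᵐ x ∂μ, u x * w x < ∞ := ae_lt_top' (hu.mul hw) (h ▸ hfin)
  have hle : (fun x => u x * w x) ≤ᵐ[μ] u := by
    filter_upwards [huw_lt, hw_le] with x hx hx_le
    rcases eq_or_ne (u x) 0 with h0 | h0
    · simp [h0]
    · exact mul_le_of_le_one_right' (hx_le fun htop => by simp [htop, ENNReal.mul_top h0] at hx)
  filter_upwards [ae_eq_of_ae_le_of_lintegral_le hle (h ▸ hfin) hu h.ge, ae_lt_top' hu hfin]
    with x hx hx_lt hx0
  exact (ENNReal.mul_eq_left hx0 hx_lt.ne).mp hx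

section AddGroup

variable {G : Type*} [MeasurableSpace G] [AddGroup G] [MeasurableAdd G] {μ : Measure G}
  [μ.IsAddRightInvariant] {Λ : Set G} {u w : G → ℝ≥0∞}

theorem lintegral_mul_tsum_comp_sub_right (hΛ : Λ.Countable) (hu : AEMeasurable u μ)
    (hw : AEMeasurable w μ) :
    ∫⁻ x, w x * ∑' p : Λ, u (x - p) ∂μ = ∫⁻ x, u x * ∑' p : Λ, w (x + p) ∂μ := by
  have : Countable Λ := hΛ.to_subtype
  have hsub (p : G) : AEMeasurable (fun x => u (x - p)) μ :=
    hu.comp_quasiMeasurePreserving (measurePreserving_sub_right μ p).quasiMeasurePreserving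
  have hadd (p : G) : AEMeasurable (fun x => w (x + p)) μ :=
    hw.comp_quasiMeasurePreserving (measurePreserving_add_right μ p).quasiMeasurePreserving
  calc ∫⁻ x, w x * ∑' p : Λ, u (x - p) ∂μ
      = ∑' p : Λ, ∫⁻ x, w x * u (x - p) ∂μ := by
        simp_rw [← ENNReal.tsum_mul_left]
        exact lintegral_tsum fun p : Λ => hw.mul (hsub p)
    _ = ∑' p : Λ, ∫⁻ x, u x * w (x + p) ∂μ := by
        refine tsum_congr fun p => ?_
        rw [← lintegral_add_right_eq_self _ (p : G)]
        simp_rw [add_sub_cancel_right, mul_comm]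
    _ = ∫⁻ x, u x * ∑' p : Λ, w (x + p) ∂μ := by
        simp_rw [← ENNReal.tsum_mul_left]
        exact (lintegral_tsum fun p : Λ => hu.mul (hadd p)).symm

/-- The packing bound is assumed only where the sum is finite: this is what a bound on a real
`tsum`, which is `0` when the series diverges, yields. -/
theorem ae_tsum_comp_add_eq_one_of_tiles (hΛ : Λ.Countable) (hu : AEMeasurable u μ)
    (hw : AEMeasurable w μ) (huw : ∫⁻ x, u x ∂μ = ∫⁻ x, w x ∂μ) (hfin : ∫⁻ x, u x ∂μ ≠ ∞)
    (htiles : ∀ᵐ x ∂μ, w x ≠ 0 → ∑' p : Λ, u (x - p) = 1)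
    (hpack : ∀ᵐ x ∂μ, ∑' p : Λ, w (x + p) ≠ ∞ → ∑' p : Λ, w (x + p) ≤ 1) :
    ∀ᵐ x ∂μ, u x ≠ 0 → ∑' p : Λ, w (x + p) = 1 := by
  have : Countable Λ := hΛ.to_subtype
  have hsum : AEMeasurable (fun x => ∑' p : Λ, w (x + p)) μ := AEMeasurable.tsum fun p : Λ =>
    hw.comp_quasiMeasurePreserving (measurePreserving_add_right μ (p : G)).quasiMeasurePreserving
  refine ae_eq_one_of_lintegral_mul_eq_lintegral hu hsum hpack ?_ hfin
  calc ∫⁻ x, u x * ∑' p : Λ, w (x + p) ∂μ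
      = ∫⁻ x, w x * ∑' p : Λ, u (x - p) ∂μ := (lintegral_mul_tsum_comp_sub_right hΛ hu hw).symm
    _ = ∫⁻ x, w x ∂μ := by
        refine lintegral_congr_ae (htiles.mono fun x hx => ?_)
        rcases eq_or_ne (w x) 0 with h0 | h0
        · simp [h0]
        · simp only [hx h0, mul_one]
    _ = ∫⁻ x, u x ∂μ := huw.symm

end AddGroup

theorem tiling_transfers_to_support_general
    {d : ℕ} (f g : EuclideanSpace ℝ (Fin d) → ℝ)
    (hfi : Integrable f) (hgi : Integrable g) (hf0 : 0 ≤ f) (hg0 : 0 ≤ g)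
    (hfint : ∫ x, f x = 1) (hgint : ∫ x, g x = 1)
    (Λ : Set (EuclideanSpace ℝ (Fin d))) (hΛ : Λ.Countable)
    (hgpack : ∀ᵐ x : EuclideanSpace ℝ (Fin d) ∂volume, ∑' p : Λ, g (x - p) ≤ 1)
    (hftiles : ∀ᵐ x : EuclideanSpace ℝ (Fin d) ∂volume,
      x ∈ -Function.support g → ∑' p : Λ, f (x - p) = 1) :
    ∀ᵐ y : EuclideanSpace ℝ (Fin d) ∂volume,
      y ∈ -Function.support f → ∑' p : Λ, g (y - p) = 1 := by
  have hneg := (Measure.measurePreserving_neg (volume : Measure (EuclideanSpace ℝ (Fin d))))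
    |>.quasiMeasurePreserving
  have hf1 : ∫⁻ x, ENNReal.ofReal (f x) = 1 := by
    rw [← ofReal_integral_eq_lintegral_ofReal hfi (.of_forall hf0), hfint, ENNReal.ofReal_one]
  have hg1 : ∫⁻ x, ENNReal.ofReal (g (-x)) = 1 := by
    rw [lintegral_neg_eq_self fun x => ENNReal.ofReal (g x),
      ← ofReal_integral_eq_lintegral_ofReal hgi (.of_forall hg0), hgint, ENNReal.ofReal_one]
  have htiles : ∀ᵐ x ∂volume, ENNReal.ofReal (g (-x)) ≠ 0 →
      ∑' p : Λ, ENNReal.ofReal (f (x - p)) = 1 :=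
    hftiles.mono fun x hx hgx => (tsum_ofReal_eq_one_iff fun p => hf0 _).mpr <|
      hx (Set.mem_neg.mpr (ENNReal.ofReal_pos.mp (pos_iff_ne_zero.mpr hgx)).ne')
  have hpack : ∀ᵐ x ∂volume, ∑' p : Λ, ENNReal.ofReal (g (-(x + p))) ≠ ∞ →
      ∑' p : Λ, ENNReal.ofReal (g (-(x + p))) ≤ 1 :=
    (hneg.ae hgpack).mono fun x hx => by
      simpa only [neg_add', sub_eq_add_neg] using tsum_ofReal_le_one (fun p => hg0 _) hx
  have hmain := ae_tsum_comp_add_eq_one_of_tiles hΛ hfi.aemeasurable.ennreal_ofReal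
    (hgi.aemeasurable.ennreal_ofReal.comp_quasiMeasurePreserving hneg) (hf1.trans hg1.symm)
    (by simp [hf1]) htiles hpack
  filter_upwards [hneg.ae hmain] with y hy hfy
  refine (tsum_ofReal_eq_one_iff fun p => hg0 _).mp ?_
  simpa only [Function.comp_apply, neg_neg, neg_add', sub_eq_add_neg] using
    hy (ENNReal.ofReal_pos.mpr ((hf0 _).lt_of_ne' (Set.mem_neg.mp hfy))).ne'

theorem tiling_transfers_to_support
    {d : ℕ} (f g : EuclideanSpace ℝ (Fin d) → ℝ)
    (hfi : Integrable f) (hgi : Integrable g) (hf0 : 0 ≤ f) (hg0 : 0 ≤ g)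
    (hfint : ∫ x, f x = 1) (hgint : ∫ x, g x = 1)
    (Λ : Set (EuclideanSpace ℝ (Fin d))) (hΛ : Λ.Countable)
    (hfpack : ∀ᵐ x : EuclideanSpace ℝ (Fin d) ∂volume, ∑' p : Λ, f (x - p) ≤ 1)
    (hgpack : ∀ᵐ x : EuclideanSpace ℝ (Fin d) ∂volume, ∑' p : Λ, g (x - p) ≤ 1)
    (hftiles : ∀ᵐ x : EuclideanSpace ℝ (Fin d) ∂volume,
      x ∈ -Function.support g → ∑' p : Λ, f (x - p) = 1) :
    ∀ᵐ y : EuclideanSpace ℝ (Fin d) ∂volume,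
      y ∈ -Function.support f → ∑' p : Λ, g (y - p) = 1 :=
  tiling_transfers_to_support_general f g hfi hgi hf0 hg0 hfint hgint Λ hΛ hgpack hftiles
end

section
/- Let Ω ⊆ ℝ^d be measurable of measure 1 and Λ ⊆ ℝ^d a countable set. Then the family {e^{2πi⟨λ,x⟩} : λ ∈ Λ} is an orthonormal basis of L²(Ω) if and only if ∑_{λ∈Λ} |χ̂_Ω(x−λ)|² = 1 for almost every x ∈ ℝ^d, where χ̂_Ω(ξ) = ∫_Ω e^{−2πi⟨ξ,x⟩} dx. -/
/-!
Write `e_t ∈ L²(Ω)` for the exponential `y ↦ e^{2πi⟨t,y⟩}`. The integral in the statement is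
`⟪e_x, e_λ⟫`, so the condition says that Parseval's identity holds for `e_x` for almost every `x`.
The `e_x` are unit vectors (as `|Ω| = 1`), depend weakly continuously on `x`, and no nonzero
vector is orthogonal to all of them (injectivity of the Fourier transform on `L¹`). For such a
family, Parseval for almost every `x` gives, by continuity, Bessel's bound
`|⟪e_x, e_λ⟫|² + |⟪e_x, e_μ⟫|² ≤ 1` for every `x`, and taking `x = μ` shows that the `e_λ` are
orthogonal. A vector orthogonal to all `e_λ` is orthogonal to every `e_x` for which Parseval holds,
hence by continuity to all `e_x`, hence it is zero.
-/

open MeasureTheory Filter Matrix Submodule WithLp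
open scoped InnerProductSpace ComplexConjugate FourierTransform

section Hilbert

variable {𝕜 E : Type*} [RCLike 𝕜] [NormedAddCommGroup E] [InnerProductSpace 𝕜 E]

theorem HilbertBasis.tsum_norm_inner_sq {ι : Type*} [CompleteSpace E] (b : HilbertBasis ι 𝕜 E)
    (x : E) : ∑' i, ‖⟪b i, x⟫_𝕜‖ ^ 2 = ‖x‖ ^ 2 := by
  have h := b.hasSum_inner_mul_inner x x
  have hterm : ∀ i, ⟪x, b i⟫_𝕜 * ⟪b i, x⟫_𝕜 = ((‖⟪b i, x⟫_𝕜‖ ^ 2 : ℝ) : 𝕜) := fun i => by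
    rw [← inner_conj_symm, RCLike.conj_mul]; norm_cast
  rw [funext hterm, inner_self_eq_norm_sq_to_K, ← RCLike.ofReal_pow, RCLike.hasSum_ofReal] at h
  exact h.tsum_eq

theorem Orthonormal.inner_eq_zero_of_tsum_norm_inner_sq_eq {ι : Type*} {v : ι → E}
    (hv : Orthonormal 𝕜 v) {w x : E} (hw : ∀ i, ⟪v i, w⟫_𝕜 = 0)
    (hx : ∑' i, ‖⟪v i, x⟫_𝕜‖ ^ 2 = ‖x‖ ^ 2) : ⟪w, x⟫_𝕜 = 0 := by
  rcases eq_or_ne w 0 with rfl | hw0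
  · exact inner_zero_left x
  set u : E := (‖w‖⁻¹ : 𝕜) • w
  have hu : Orthonormal 𝕜 fun o : Option ι => o.elim u v := by
    refine ⟨fun o => o.rec (norm_smul_inv_norm hw0) hv.1, ?_⟩
    rintro (_ | i) (_ | j) hij
    · exact absurd rfl hij
    · simp [u, inner_smul_left, inner_eq_zero_symm.mp (hw j)]
    · simp [u, inner_smul_right, hw]
    · exact hv.2 (Option.some_injective _ |>.ne_iff.mp hij)
  have hbessel : ∑' i, ‖⟪v i, x⟫_𝕜‖ ^ 2 ≤ ‖x‖ ^ 2 - ‖⟪u, x⟫_𝕜‖ ^ 2 := by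
    refine (hv.inner_products_summable x).tsum_le_of_sum_le fun s => ?_
    have := hu.sum_inner_products_le x (s := s.insertNone)
    rw [Finset.sum_insertNone] at this
    simp only [Option.elim] at this
    linarith
  have hux : ⟪u, x⟫_𝕜 = 0 := by
    rw [hx] at hbessel
    exact norm_eq_zero.mp (by nlinarith [norm_nonneg ⟪u, x⟫_𝕜])
  simpa [u, inner_smul_left, hw0] using hux

end Hilbert

theorem Continuous.le_of_ae_le {X Y : Type*} [TopologicalSpace X] [MeasurableSpace X]
    {μ : Measure X} [μ.IsOpenPosMeasure] [TopologicalSpace Y] [LinearOrder Y]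
    [OrderClosedTopology Y] {f g : X → Y} (hf : Continuous f) (hg : Continuous g)
    (h : f ≤ᵐ[μ] g) : f ≤ g := by
  have hmax : max f g = g :=
    ((hf.max hg).ae_eq_iff_eq μ hg).mp (h.mono fun x hx => max_eq_right hx)
  exact fun x => max_eq_right_iff.mp (congrFun hmax x)

section ContinuousFamily

variable {𝕜 E X ι : Type*} [RCLike 𝕜] [NormedAddCommGroup E] [InnerProductSpace 𝕜 E]
  [TopologicalSpace X] [MeasurableSpace X] {μ : Measure X} [μ.IsOpenPosMeasure] {e : X → E}
  {l : ι → X}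

theorem sum_norm_inner_sq_le_one_of_ae_tsum_eq_one (he : ∀ v, Continuous fun x => ⟪e x, v⟫_𝕜)
    (h : ∀ᵐ x ∂μ, ∑' i, ‖⟪e x, e (l i)⟫_𝕜‖ ^ 2 = 1) (s : Finset ι) (x : X) :
    ∑ i ∈ s, ‖⟪e x, e (l i)⟫_𝕜‖ ^ 2 ≤ 1 := by
  have hae : ∀ᵐ x ∂μ, ∑ i ∈ s, ‖⟪e x, e (l i)⟫_𝕜‖ ^ 2 ≤ 1 := by
    filter_upwards [h] with x hx
    have hsum : Summable fun i => ‖⟪e x, e (l i)⟫_𝕜‖ ^ 2 :=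
      by_contra fun hns => by simp [tsum_eq_zero_of_not_summable hns] at hx
    exact hx ▸ hsum.sum_le_tsum s fun i _ => by positivity
  refine Continuous.le_of_ae_le (μ := μ) ?_ continuous_const hae x
  exact continuous_finsetSum s fun i _ => (he _).norm.pow 2

theorem orthonormal_of_ae_tsum_norm_inner_sq_eq_one (he_norm : ∀ x, ‖e x‖ = 1)
    (he : ∀ v, Continuous fun x => ⟪e x, v⟫_𝕜)
    (h : ∀ᵐ x ∂μ, ∑' i, ‖⟪e x, e (l i)⟫_𝕜‖ ^ 2 = 1) : Orthonormal 𝕜 (e ∘ l) := by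
  classical
  refine ⟨fun i => he_norm _, fun i j hij => ?_⟩
  have hle := sum_norm_inner_sq_le_one_of_ae_tsum_eq_one he h {i, j} (l j)
  rw [Finset.sum_pair hij, inner_self_eq_norm_sq_to_K, he_norm] at hle
  simp only [RCLike.ofReal_one, one_pow, norm_one] at hle
  show ⟪e (l i), e (l j)⟫_𝕜 = 0
  exact inner_eq_zero_symm.mp (norm_eq_zero.mp (by nlinarith [norm_nonneg ⟪e (l j), e (l i)⟫_𝕜]))

variable (μ) in
theorem exists_hilbertBasis_iff_ae_tsum_norm_inner_sq_eq_one [CompleteSpace E]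
    (he_norm : ∀ x, ‖e x‖ = 1) (he : ∀ v, Continuous fun x => ⟪e x, v⟫_𝕜)
    (he_total : ∀ v, (∀ x, ⟪e x, v⟫_𝕜 = 0) → v = 0) (l : ι → X) :
    (∃ b : HilbertBasis ι 𝕜 E, ∀ i, b i = e (l i)) ↔
      ∀ᵐ x ∂μ, ∑' i, ‖⟪e x, e (l i)⟫_𝕜‖ ^ 2 = 1 := by
  constructor
  · rintro ⟨b, hb⟩
    refine Eventually.of_forall fun x => ?_
    simp_rw [← hb, norm_inner_symm (e x), b.tsum_norm_inner_sq, he_norm, one_pow]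
  · intro h
    have hortho := orthonormal_of_ae_tsum_norm_inner_sq_eq_one he_norm he h
    have hperp : (span 𝕜 (Set.range (e ∘ l)))ᗮ = ⊥ := by
      refine (Submodule.eq_bot_iff _).mpr fun w hw => he_total w fun x => ?_
      have hwl : ∀ i, ⟪(e ∘ l) i, w⟫_𝕜 = 0 := fun i =>
        inner_right_of_mem_orthogonal (subset_span (Set.mem_range_self i)) hw
      have hae : ∀ᵐ x ∂μ, ⟪e x, w⟫_𝕜 = 0 := by
        filter_upwards [h] with x hx
        refine inner_eq_zero_symm.mp (hortho.inner_eq_zero_of_tsum_norm_inner_sq_eq hwl ?_)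
        simpa [norm_inner_symm _ (e x), he_norm] using hx
      exact congrFun (((he w).ae_eq_iff_eq μ continuous_const).mp hae) x
    exact ⟨.mkOfOrthogonalEqBot hortho hperp, fun i => by simp⟩

end ContinuousFamily

theorem ae_eq_zero_of_fourier_eq_zero {V : Type*} [NormedAddCommGroup V] [InnerProductSpace ℝ V]
    [FiniteDimensional ℝ V] [MeasurableSpace V] [BorelSpace V] {g : V → ℂ} (hg : Integrable g)
    (h : 𝓕 g = 0) : g =ᵐ[volume] 0 := by
  refine ae_eq_zero_of_integral_contDiff_smul_eq_zero hg.locallyIntegrable fun ψ hψ hψc => ?_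
  -- `ψ = 𝓕 φ` for a Schwartz function `φ`, and `∫ 𝓕 φ • g = ∫ φ • 𝓕 g = 0`.
  let Ψ : SchwartzMap V ℂ := HasCompactSupport.toSchwartzMap (f := fun x => (ψ x : ℂ))
    (hψc.comp_left Complex.ofReal_zero) (Complex.ofRealCLM.contDiff.comp hψ)
  let φ : SchwartzMap V ℂ := 𝓕⁻ Ψ
  have hφ : 𝓕 (φ : V → ℂ) = Ψ := by
    rw [← SchwartzMap.fourier_coe, FourierTransform.fourier_fourierInv_eq]
  have hswap : ∫ x, 𝓕 (φ : V → ℂ) x • g x = ∫ x, φ x • 𝓕 g x := by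
    have := VectorFourier.integral_fourierIntegral_smul_eq_flip (L := innerₗ V)
      Real.continuous_fourierChar continuous_inner (φ.integrable (μ := volume)) hg
    rwa [flip_innerₗ] at this
  calc ∫ x, ψ x • g x = ∫ x, 𝓕 (φ : V → ℂ) x • g x := by
        simp only [hφ, Complex.real_smul, smul_eq_mul]; rfl
    _ = 0 := by simp only [hswap, h, Pi.zero_apply, smul_zero, integral_zero]

section Exponentials

variable {ι : Type*} [Fintype ι]

noncomputable def expDot (t x : ι → ℝ) : ℂ :=
  Complex.exp (2 * (Real.pi : ℂ) * Complex.I * ((dotProduct t x : ℝ) : ℂ))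

theorem continuous_expDot : Continuous fun p : (ι → ℝ) × (ι → ℝ) => expDot p.1 p.2 := by
  unfold expDot dotProduct
  fun_prop

theorem norm_expDot (t x : ι → ℝ) : ‖expDot t x‖ = 1 := by
  rw [expDot, Complex.norm_exp]
  simp

theorem conj_expDot (t x : ι → ℝ) : conj (expDot t x) = expDot (-t) x := by
  rw [expDot, expDot, ← Complex.exp_conj, neg_dotProduct]
  simp [map_ofNat]

theorem expDot_mul_expDot (s t x : ι → ℝ) : expDot s x * expDot t x = expDot (s + t) x := by
  rw [expDot, expDot, expDot, ← Complex.exp_add, add_dotProduct]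
  push_cast
  ring_nf

theorem ae_eq_zero_of_integral_expDot_mul_eq_zero {g : (ι → ℝ) → ℂ} (hg : Integrable g)
    (h : ∀ ξ, ∫ y, expDot ξ y * g y = 0) : g =ᵐ[volume] 0 := by
  have hmp := PiLp.volume_preserving_ofLp ι
  have hemb := (MeasurableEquiv.toLp 2 (ι → ℝ)).symm.measurableEmbedding
  have hG : Integrable (g ∘ ofLp : EuclideanSpace ℝ ι → ℂ) :=
    (hmp.integrable_comp_emb hemb).mpr hg
  have hF : 𝓕 (g ∘ ofLp : EuclideanSpace ℝ ι → ℂ) = 0 := by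
    ext w
    rw [Real.fourier_eq, Pi.zero_apply, ← h (-ofLp w), ← hmp.integral_comp hemb]
    congr 1 with v
    rw [Circle.smul_def, Real.fourierChar_apply, expDot, EuclideanSpace.inner_eq_star_dotProduct,
      star_trivial, neg_dotProduct, smul_eq_mul, Function.comp_apply]
    push_cast
    ring_nf
  exact (PiLp.volume_preserving_toLp ι).quasiMeasurePreserving.ae_eq_comp
    (ae_eq_zero_of_fourier_eq_zero hG hF)

theorem ae_restrict_eq_zero_of_integral_expDot_mul_eq_zero {s : Set (ι → ℝ)} {g : (ι → ℝ) → ℂ}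
    (hg : IntegrableOn g s) (h : ∀ ξ, ∫ y in s, expDot ξ y * g y = 0) :
    g =ᵐ[volume.restrict s] 0 := by
  rw [IntegrableOn, ← Measure.restrict_toMeasurable_of_sFinite] at hg
  simp only [← Measure.restrict_toMeasurable_of_sFinite s] at h ⊢
  have hm := measurableSet_toMeasurable volume s
  have hind := ae_eq_zero_of_integral_expDot_mul_eq_zero ((integrable_indicator_iff hm).mpr hg)
    fun ξ => by simpa only [← Set.indicator_mul_right, integral_indicator hm] using h ξ
  exact (indicator_ae_eq_restrict hm).symm.trans (ae_restrict_of_ae hind)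

end Exponentials

section ExpLp

variable {ι : Type*} [Fintype ι] (μ : Measure (ι → ℝ)) [IsFiniteMeasure μ]

theorem memLp_expDot (t : ι → ℝ) : MemLp (expDot t) 2 μ :=
  .of_bound (continuous_expDot.comp (Continuous.prodMk_right t)).aestronglyMeasurable 1
    (ae_of_all _ fun x => (norm_expDot t x).le)

noncomputable def expLp (t : ι → ℝ) : Lp ℂ 2 μ := (memLp_expDot μ t).toLp

variable {μ}

theorem coeFn_expLp (t : ι → ℝ) : expLp μ t =ᵐ[μ] expDot t := (memLp_expDot μ t).coeFn_toLp

theorem eq_expLp_iff {f : Lp ℂ 2 μ} {t : ι → ℝ} : f = expLp μ t ↔ f =ᵐ[μ] expDot t := by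
  rw [Lp.ext_iff]
  exact ⟨fun h => h.trans (coeFn_expLp t), fun h => h.trans (coeFn_expLp t).symm⟩

theorem inner_expLp (t : ι → ℝ) (f : Lp ℂ 2 μ) :
    ⟪expLp μ t, f⟫_ℂ = ∫ y, expDot (-t) y * f y ∂μ := by
  rw [L2.inner_def]
  refine integral_congr_ae ?_
  filter_upwards [coeFn_expLp t] with y hy
  rw [hy, RCLike.inner_apply, conj_expDot, mul_comm]

theorem inner_expLp_expLp (s t : ι → ℝ) :
    ⟪expLp μ s, expLp μ t⟫_ℂ =
      ∫ y, Complex.exp ((-2 : ℂ) * (Real.pi : ℂ) * Complex.I * ((dotProduct (s - t) y : ℝ) : ℂ))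
        ∂μ := by
  rw [inner_expLp]
  refine integral_congr_ae ?_
  filter_upwards [coeFn_expLp t] with y hy
  rw [hy, expDot_mul_expDot, expDot, neg_add_eq_sub, ← neg_sub, neg_dotProduct]
  push_cast
  ring_nf

theorem norm_expLp [IsProbabilityMeasure μ] (t : ι → ℝ) : ‖expLp μ t‖ = 1 := by
  have h := inner_self_eq_norm_sq (𝕜 := ℂ) (expLp μ t)
  simp only [inner_expLp_expLp, sub_self, zero_dotProduct, Complex.ofReal_zero, mul_zero,
    Complex.exp_zero, integral_const, probReal_univ, one_smul, RCLike.one_re] at h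
  exact (pow_eq_one_iff_of_nonneg (norm_nonneg _) two_ne_zero).mp h.symm

theorem continuous_inner_expLp (f : Lp ℂ 2 μ) : Continuous fun t => ⟪expLp μ t, f⟫_ℂ := by
  simp only [inner_expLp]
  refine continuous_of_dominated (bound := fun y => ‖f y‖) ?_ ?_
    ((Lp.memLp f).integrable one_le_two).norm ?_
  · exact fun t => ((continuous_expDot.comp (Continuous.prodMk_right (-t))).aestronglyMeasurable.mul
      (Lp.aestronglyMeasurable f))
  · exact fun t => ae_of_all _ fun y => by rw [norm_mul, norm_expDot, one_mul]
  · exact ae_of_all _ fun y => ((continuous_expDot.comp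
      (continuous_neg.prodMk continuous_const)).mul continuous_const)

theorem eq_zero_of_forall_inner_expLp_eq_zero {Ω : Set (ι → ℝ)}
    [IsFiniteMeasure (volume.restrict Ω)] {f : Lp ℂ 2 (volume.restrict Ω)}
    (hf : ∀ t, ⟪expLp _ t, f⟫_ℂ = 0) : f = 0 := by
  refine Lp.ext ((ae_restrict_eq_zero_of_integral_expDot_mul_eq_zero
    ((Lp.memLp f).integrable one_le_two) fun ξ => ?_).trans (Lp.coeFn_zero ..).symm)
  simpa [inner_expLp] using hf (-ξ)

end ExpLp

theorem spectrum_iff_power_spectrum_tiles_general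
    {d : ℕ} (Ω : Set (Fin d → ℝ)) (hvol : volume Ω = 1)
    (Λ : Set (Fin d → ℝ)) :
    (∃ b : HilbertBasis Λ ℂ (Lp ℂ 2 (volume.restrict Ω)),
        ∀ p : Λ, (b p : (Fin d → ℝ) → ℂ) =ᵐ[volume.restrict Ω]
          fun x => Complex.exp (2 * (Real.pi : ℂ) * Complex.I *
            ((dotProduct (p : Fin d → ℝ) x : ℝ) : ℂ))) ↔
      (∀ᵐ x : Fin d → ℝ ∂volume,
        ∑' p : Λ,
          ‖∫ y in Ω, Complex.exp ((-2 : ℂ) * (Real.pi : ℂ) * Complex.I *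
            ((dotProduct (x - (p : Fin d → ℝ)) y : ℝ) : ℂ))‖ ^ 2 = 1) := by
  have : IsProbabilityMeasure (volume.restrict Ω) := ⟨by simp [hvol]⟩
  have key := exists_hilbertBasis_iff_ae_tsum_norm_inner_sq_eq_one volume
    (norm_expLp (μ := volume.restrict Ω)) continuous_inner_expLp
    (fun _ => eq_zero_of_forall_inner_expLp_eq_zero) ((↑) : Λ → Fin d → ℝ)
  simp only [eq_expLp_iff, inner_expLp_expLp] at key
  exact key

theorem spectrum_iff_power_spectrum_tiles
    {d : ℕ} (Ω : Set (Fin d → ℝ)) (hmeas : MeasurableSet Ω) (hvol : volume Ω = 1)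
    (Λ : Set (Fin d → ℝ)) (hΛ : Λ.Countable) :
    (∃ b : HilbertBasis Λ ℂ (Lp ℂ 2 (volume.restrict Ω)),
        ∀ p : Λ, (b p : (Fin d → ℝ) → ℂ) =ᵐ[volume.restrict Ω]
          fun x => Complex.exp (2 * (Real.pi : ℂ) * Complex.I *
            ((dotProduct (p : Fin d → ℝ) x : ℝ) : ℂ))) ↔
      (∀ᵐ x : Fin d → ℝ ∂volume,
        ∑' p : Λ,
          ‖∫ y in Ω, Complex.exp ((-2 : ℂ) * (Real.pi : ℂ) * Complex.I *
            ((dotProduct (x - (p : Fin d → ℝ)) y : ℝ) : ℂ))‖ ^ 2 = 1) :=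
  spectrum_iff_power_spectrum_tiles_general Ω hvol Λ
end

section
/- Any positive definite binary quadratic form Q(x,y) = ax² + bxy + cy² whose value Q(x,y) is a sum of two integer squares for every (x,y) ∈ ℤ², must have discriminant-determinant ac − b²/4 equal to the square of an integer. -/
-- Every n ≡ 3 (mod 4) has a prime factor ≡ 3 (mod 4).
lemma aux_exists_prime_3mod4 : ∀ n : ℕ, n % 4 = 3 → ∃ p : ℕ, p.Prime ∧ p % 4 = 3 ∧ p ∣ n := by
  intro n
  induction n using Nat.strong_induction_on with
  | _ n ih =>
    intro hn
    have hn1 : n ≠ 1 := by omega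
    have hq : n.minFac.Prime := Nat.minFac_prime hn1
    have hqd : n.minFac ∣ n := Nat.minFac_dvd n
    have hq2 : n.minFac ≠ 2 := by
      intro h
      obtain ⟨t, ht⟩ := h ▸ hqd
      omega
    have hqo : n.minFac % 2 = 1 := Nat.odd_iff.mp (hq.odd_of_ne_two hq2)
    rcases (by omega : n.minFac % 4 = 1 ∨ n.minFac % 4 = 3) with h1 | h3
    · set q := n.minFac with hqdef
      set t := n / q with htdef
      have ht : q * t = n := Nat.mul_div_cancel' hqd
      have htm : n % 4 = q % 4 * (t % 4) % 4 := by rw [← ht, Nat.mul_mod]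
      rw [h1, one_mul] at htm
      have ht4 : t % 4 = 3 := by omega
      have htlt : t < n := by
        apply Nat.div_lt_self (by omega)
        have := hq.two_le
        omega
      obtain ⟨p, hp, hp4, hpd⟩ := ih t htlt ht4
      exact ⟨p, hp, hp4, hpd.trans ⟨q, by rw [← ht, mul_comm]⟩⟩
    · exact ⟨n.minFac, hq, h3, hqd⟩


lemma aux_punch (A D p w : ℕ) (hA : 0 < A) (hD : 0 < D) (hp : p.Prime) (hp4 : p % 4 = 3)
    (hAs : ∀ q : ℕ, q.Prime → q % 4 = 3 → Even (padicValNat q A))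
    (hdvd : p ∣ w ^ 2 + D) (hw : ¬ p ∣ w)
    (hval : ∀ v : ℕ, ∃ x y : ℕ, A * (v ^ 2 + D) = x ^ 2 + y ^ 2) : False := by
  haveI : Fact p.Prime := ⟨hp⟩
  have hp2 : p ≠ 2 := by omega
  obtain ⟨v, hv1, hv2⟩ : ∃ v : ℕ, p ∣ v ^ 2 + D ∧ ¬ p ^ 2 ∣ v ^ 2 + D := by
    by_cases hsq : p ^ 2 ∣ w ^ 2 + D
    · have h1 : (w + p) ^ 2 + D = w ^ 2 + D + p * (2 * w + p) := by ring
      refine ⟨w + p, ?_, ?_⟩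
      · rw [h1]; exact dvd_add hdvd (Dvd.intro _ rfl)
      · intro hc
        have h2 : p ^ 2 ∣ p * (2 * w + p) := by
          have := Nat.dvd_sub hc hsq
          rw [h1, Nat.add_sub_cancel_left] at this
          exact this
        have h3 : p ∣ 2 * w + p := by
          rw [pow_two] at h2
          exact (mul_dvd_mul_iff_left hp.ne_zero).mp h2
        have h4 : p ∣ 2 * w := by
          have := Nat.dvd_sub h3 (dvd_refl p)
          simpa using this
        rcases (Nat.Prime.dvd_mul hp).mp h4 with h | h
        · have := Nat.le_of_dvd (by norm_num) h
          have := hp.two_le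
          omega
        · exact hw h
    · exact ⟨w, hdvd, hsq⟩
  have hn0 : v ^ 2 + D ≠ 0 := by positivity
  have hf1 : 1 ≤ (v ^ 2 + D).factorization p := by
    rw [← hp.pow_dvd_iff_le_factorization hn0]; simpa using hv1
  have hf2 : ¬ 2 ≤ (v ^ 2 + D).factorization p := by
    rw [← hp.pow_dvd_iff_le_factorization hn0]; exact hv2
  have hfd : (v ^ 2 + D).factorization p = padicValNat p (v ^ 2 + D) :=
    Nat.factorization_def _ hp
  have hval1 : padicValNat p (v ^ 2 + D) = 1 := by omega
  obtain ⟨x, y, hxy⟩ := hval v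
  have hsots : Even (padicValNat p (A * (v ^ 2 + D))) :=
    Nat.eq_sq_add_sq_iff.mp ⟨x, y, hxy⟩ _
      (Nat.mem_primeFactors.mpr ⟨hp, dvd_mul_of_dvd_right hv1 A, mul_ne_zero (by omega) hn0⟩) hp4
  rw [padicValNat.mul (by omega) hn0, hval1] at hsots
  obtain ⟨k, hk⟩ := hAs p hp hp4
  obtain ⟨l, hl⟩ := hsots
  omega


lemma aux_jacobi_neg (D : ℕ) (hodd : D % 2 = 1) (h0 : 0 < D) (hns : ¬ IsSquare D) :
    ∃ u : ℕ, Nat.Coprime u D ∧ jacobiSym u D = -1 := by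
  obtain ⟨a, b, hab, hsf⟩ := Nat.sq_mul_squarefree D
  have ha0 : a ≠ 0 := hsf.ne_zero
  have ha1 : a ≠ 1 := by
    rintro rfl
    exact hns ⟨b, by rw [← hab]; ring⟩
  have hb0 : b ≠ 0 := by
    rintro rfl
    rw [← hab] at h0; simp at h0
  set q := a.minFac with hqdef
  have hq : q.Prime := Nat.minFac_prime ha1
  have hqa : q ∣ a := Nat.minFac_dvd a
  have hqD : q ∣ D := hqa.trans ⟨b ^ 2, by rw [← hab]; ring⟩
  have hq2 : q ≠ 2 := by
    intro h2
    obtain ⟨t, ht⟩ := hqD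
    rw [h2] at ht
    omega
  haveI : Fact q.Prime := ⟨hq⟩
  have hD0 : D ≠ 0 := h0.ne'
  -- the multiplicity of q in D is odd
  have hfa : a.factorization q = 1 := by
    have hle : a.factorization q ≤ 1 := hsf.natFactorization_le_one q
    have hge : 0 < a.factorization q := hq.factorization_pos_of_dvd ha0 hqa
    omega
  have hfact : D.factorization q = 2 * b.factorization q + 1 := by
    rw [← hab, Nat.factorization_mul (pow_ne_zero 2 hb0) ha0]
    rw [Nat.factorization_pow]
    simp [hfa, two_mul, mul_comm]
  set e := D.factorization q with hedef
  set m' := D / q ^ e with hmdef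
  have hqm : q ^ e * m' = D := Nat.ordProj_mul_ordCompl_eq_self D q
  have hm0 : m' ≠ 0 := (Nat.ordCompl_pos q hD0).ne'
  have hcop : Nat.Coprime q m' := Nat.coprime_ordCompl hq hD0
  -- a nonsquare mod q
  obtain ⟨x, hx⟩ := FiniteField.exists_nonsquare (F := ZMod q)
    (by rw [ZMod.ringChar_zmod_n]; exact hq2)
  have hx0 : x ≠ 0 := by rintro rfl; exact hx ⟨0, by ring⟩
  obtain ⟨u, hu1, hu2⟩ := Nat.chineseRemainder hcop x.val 1
  have hux : ((u : ℕ) : ZMod q) = x := by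
    have := (ZMod.natCast_eq_natCast_iff _ _ _).mpr hu1
    rwa [ZMod.natCast_zmod_val] at this
  have hcuq : Nat.Coprime (u : ℕ) q := by
    rw [Nat.coprime_comm]
    refine (Nat.Prime.coprime_iff_not_dvd hq).mpr ?_
    intro hd
    exact hx0 (by rw [← hux, (ZMod.natCast_eq_zero_iff _ _).mpr hd])
  have hcum : Nat.Coprime (u : ℕ) m' := by
    have h' : (u : ℕ) % m' = 1 % m' := hu2
    have : Nat.gcd m' u = Nat.gcd m' 1 := by
      rw [Nat.gcd_rec m' u, Nat.gcd_rec m' 1, h']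
    simpa [Nat.coprime_comm, Nat.Coprime] using this
  refine ⟨u, ?_, ?_⟩
  · rw [← hqm]
    exact Nat.Coprime.mul_right (hcuq.pow_right e) hcum
  · have hlq : legendreSym q (u : ℕ) = -1 := (legendreSym.eq_neg_one_iff' q).mpr (hux ▸ hx)
    have h1 : jacobiSym (u : ℕ) (q ^ e) = (-1) ^ e := by
      rw [jacobiSym.pow_right, ← jacobiSym.legendreSym.to_jacobiSym, hlq]
    have h2 : jacobiSym (u : ℕ) m' = 1 := by
      have hmod : ((u : ℕ) : ℤ) % (m' : ℤ) = (1 : ℤ) % (m' : ℤ) := by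
        have h' : (u : ℕ) % m' = 1 % m' := hu2
        exact_mod_cast congrArg (Nat.cast : ℕ → ℤ) h'
      rw [jacobiSym.mod_left' hmod, jacobiSym.one_left]
    have he : Odd e := by rw [hfact]; exact ⟨b.factorization q, by ring⟩
    calc jacobiSym (u : ℕ) D = jacobiSym (u : ℕ) (q ^ e * m') := by rw [hqm]
      _ = jacobiSym (u : ℕ) (q ^ e) * jacobiSym (u : ℕ) m' :=
          jacobiSym.mul_right' _ (pow_ne_zero e hq.ne_zero) hm0
      _ = (-1) ^ e * 1 := by rw [h1, h2]
      _ = -1 := by rw [he.neg_one_pow, mul_one]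


lemma aux_good_prime (D : ℕ) (hD4 : D % 4 = 1) (hns : ¬ IsSquare D) :
    ∃ p w : ℕ, p.Prime ∧ p % 4 = 3 ∧ p ∣ w ^ 2 + D ∧ ¬ p ∣ w := by
  have hodd : D % 2 = 1 := by omega
  have h0 : 0 < D := by omega
  obtain ⟨u, hcop, hJ⟩ := aux_jacobi_neg D hodd h0 hns
  have hc2D : Nat.Coprime 2 D := (Nat.prime_two.coprime_iff_not_dvd).mpr (by omega)
  have hc4D : Nat.Coprime 4 D := by
    have := hc2D.pow_left 2
    norm_num at this
    exact this
  obtain ⟨r, hr4, hrD⟩ := Nat.chineseRemainder hc4D 3 u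
  have hr4' : (r : ℕ) % 4 = 3 % 4 := hr4
  have hcr4 : Nat.Coprime (r : ℕ) 4 := by
    have h2 : Nat.Coprime (r : ℕ) 2 := by
      rw [Nat.coprime_comm]
      exact (Nat.prime_two.coprime_iff_not_dvd).mpr (by omega)
    have := h2.pow_right 2
    norm_num at this
    exact this
  have hcrD : Nat.Coprime (r : ℕ) D := by
    have h' : (r : ℕ) % D = u % D := hrD
    have : Nat.gcd D r = Nat.gcd D u := by
      rw [Nat.gcd_rec D r, Nat.gcd_rec D u, h']
    have h2 : Nat.gcd D u = 1 := by rwa [Nat.coprime_comm] at hcop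
    simpa [Nat.Coprime, Nat.gcd_comm] using this.trans h2
  have hcr : Nat.Coprime (r : ℕ) (4 * D) := Nat.Coprime.mul_right hcr4 hcrD
  haveI : NeZero (4 * D) := ⟨by omega⟩
  have hunit : IsUnit ((r : ℕ) : ZMod (4 * D)) := (ZMod.isUnit_iff_coprime _ _).mpr hcr
  obtain ⟨p, hpgt, hp, hpr⟩ := Nat.forall_exists_prime_gt_and_eq_mod hunit (4 * D + 4)
  haveI : Fact p.Prime := ⟨hp⟩
  have hmod : p ≡ r [MOD 4 * D] := (ZMod.natCast_eq_natCast_iff _ _ _).mp hpr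
  have h4mod : p ≡ r [MOD 4] := hmod.of_dvd ⟨D, rfl⟩
  have hDmod : p ≡ u [MOD D] := (hmod.of_dvd ⟨4, mul_comm 4 D⟩).trans hrD
  have hp4 : p % 4 = 3 := by
    have : p % 4 = r % 4 := h4mod
    omega
  have hpodd : Odd p := by rw [Nat.odd_iff]; omega
  have hpD : ¬ p ∣ D := by
    intro hd
    have := Nat.le_of_dvd h0 hd
    omega
  -- compute the Legendre symbol of -D
  have hleg : legendreSym p (-(D : ℤ)) = 1 := by
    have e1 : legendreSym p (-(D : ℤ)) = jacobiSym (-1 : ℤ) p * jacobiSym (D : ℤ) p := by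
      rw [jacobiSym.legendreSym.to_jacobiSym, show -((D : ℤ)) = -1 * D by ring,
        jacobiSym.mul_left]
    have e2 : jacobiSym (-1 : ℤ) p = -1 := by
      rw [jacobiSym.at_neg_one hpodd, ZMod.χ₄_nat_three_mod_four hp4]
    have e3 : jacobiSym (D : ℤ) p = -1 := by
      rw [jacobiSym.quadratic_reciprocity_one_mod_four hD4 hpodd]
      have hmod' : ((p : ℕ) : ℤ) % (D : ℤ) = ((u : ℕ) : ℤ) % (D : ℤ) := by
        have h' : p % D = u % D := hDmod
        exact_mod_cast congrArg (Nat.cast : ℕ → ℤ) h'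
      rw [jacobiSym.mod_left' hmod']
      exact hJ
    rw [e1, e2, e3]; norm_num
  have hne : ((-(D : ℤ) : ℤ) : ZMod p) ≠ 0 := by
    rw [Int.cast_neg, Int.cast_natCast, neg_ne_zero]
    intro h
    exact hpD ((ZMod.natCast_eq_zero_iff _ _).mp h)
  have hsq : IsSquare ((-(D : ℤ) : ℤ) : ZMod p) := (legendreSym.eq_one_iff p hne).mp hleg
  obtain ⟨z, hz⟩ := hsq
  refine ⟨p, z.val, hp, hp4, ?_, ?_⟩
  · rw [← ZMod.natCast_eq_zero_iff]
    push_cast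
    rw [ZMod.natCast_zmod_val]
    have : (z : ZMod p) ^ 2 = -(D : ZMod p) := by
      rw [pow_two, ← hz]
      push_cast
      ring
    rw [this]
    ring
  · intro hd
    have hz0 : (z : ZMod p) = 0 := by
      have := (ZMod.natCast_eq_zero_iff z.val p).mpr hd
      rwa [ZMod.natCast_zmod_val] at this
    rw [hz0, mul_zero] at hz
    exact hne hz


lemma aux_key : ∀ D : ℕ, 0 < D → ∀ A : ℕ, 0 < A →
    (∀ q : ℕ, q.Prime → q % 4 = 3 → Even (padicValNat q A)) →
    (∀ v : ℕ, ∃ x y : ℕ, A * (v ^ 2 + D) = x ^ 2 + y ^ 2) → IsSquare D := by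
  intro D
  induction D using Nat.strong_induction_on with
  | _ D ih =>
    intro hD A hA hAs hval
    by_contra hns
    rcases (by omega : D % 4 = 0 ∨ D % 4 = 1 ∨ D % 4 = 2 ∨ D % 4 = 3) with h4 | h4 | h4 | h4
    · -- descent: D = 4 * D'
      set D' := D / 4 with hD'def
      have hDeq : D = 4 * D' := by omega
      have hD'pos : 0 < D' := by omega
      have hval' : ∀ v : ℕ, ∃ x y : ℕ, A * (v ^ 2 + D') = x ^ 2 + y ^ 2 := by
        intro v
        obtain ⟨x, y, hxy⟩ := hval (2 * v)
        have h4n : 4 * (A * (v ^ 2 + D')) = x ^ 2 + y ^ 2 := by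
          rw [← hxy, hDeq]; ring
        have hn0 : A * (v ^ 2 + D') ≠ 0 := by positivity
        rw [Nat.eq_sq_add_sq_iff]
        intro q hq hq3
        haveI : Fact q.Prime := ⟨Nat.prime_of_mem_primeFactors hq⟩
        have hq2 : q ≠ 2 := by omega
        have hev : Even (padicValNat q (x ^ 2 + y ^ 2)) :=
          Nat.eq_sq_add_sq_iff.mp ⟨x, y, rfl⟩ _ (by
            rw [← h4n]; exact Nat.mem_primeFactors.mpr ⟨Nat.prime_of_mem_primeFactors hq,
              dvd_mul_of_dvd_right (Nat.dvd_of_mem_primeFactors hq) 4, mul_ne_zero (by norm_num) hn0⟩) hq3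
        rw [← h4n, padicValNat.mul (by norm_num) hn0] at hev
        have h40 : padicValNat q 4 = 0 := by
          apply padicValNat.eq_zero_of_not_dvd
          intro hd
          have hle := Nat.le_of_dvd (by norm_num) hd
          have hq3 : q = 3 := by omega
          subst hq3
          obtain ⟨t, ht⟩ := hd
          omega
        rwa [h40, zero_add] at hev
      obtain ⟨s, hs⟩ := ih D' (by omega) hD'pos A hA hAs hval'
      exact hns ⟨2 * s, by rw [hDeq, hs]; ring⟩
    · -- Dirichlet case
      obtain ⟨p, w, hp, hp4, hdvd, hw⟩ := aux_good_prime D h4 hns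
      exact aux_punch A D p w hA hD hp hp4 hAs hdvd hw hval
    · -- D ≡ 2 mod 4 : w = D + 1 odd
      set w := D + 1 with hwdef
      obtain ⟨k, hk⟩ : ∃ k, w = 2 * k + 1 := ⟨D / 2, by omega⟩
      have hwsq : w ^ 2 = 4 * (k * k + k) + 1 := by rw [hk]; ring
      have hN : (w ^ 2 + D) % 4 = 3 := by omega
      obtain ⟨p, hp, hp4, hdvd⟩ := aux_exists_prime_3mod4 _ hN
      have hw : ¬ p ∣ w := by
        intro hd
        have h1 : p ∣ w ^ 2 := by rw [pow_two]; exact hd.mul_right w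
        have h2 : p ∣ D := by
          have := Nat.dvd_sub hdvd h1
          simpa using this
        have h3 : p ∣ 1 := by
          have := Nat.dvd_sub hd h2
          simpa [hwdef] using this
        have := Nat.le_of_dvd one_pos h3
        have := hp.two_le
        omega
      exact aux_punch A D p w hA hD hp hp4 hAs hdvd hw hval
    · -- D ≡ 3 mod 4 : w = D + 1 even
      set w := D + 1 with hwdef
      obtain ⟨k, hk⟩ : ∃ k, w = 2 * k := ⟨w / 2, by omega⟩
      have hwsq : w ^ 2 = 4 * (k * k) := by rw [hk]; ring
      have hN : (w ^ 2 + D) % 4 = 3 := by omega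
      obtain ⟨p, hp, hp4, hdvd⟩ := aux_exists_prime_3mod4 _ hN
      have hw : ¬ p ∣ w := by
        intro hd
        have h1 : p ∣ w ^ 2 := by rw [pow_two]; exact hd.mul_right w
        have h2 : p ∣ D := by
          have := Nat.dvd_sub hdvd h1
          simpa using this
        have h3 : p ∣ 1 := by
          have := Nat.dvd_sub hd h2
          simpa [hwdef] using this
        have := Nat.le_of_dvd one_pos h3
        have := hp.two_le
        omega
      exact aux_punch A D p w hA hD hp hp4 hAs hdvd hw hval


theorem binary_form_two_squares_det_is_square
    (a b c : ℝ) (hpos : 0 < a ∧ 0 < a * c - b ^ 2 / 4)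
    (hval : ∀ x y : ℤ, ∃ m n : ℤ,
      a * (x : ℝ) ^ 2 + b * (x : ℝ) * (y : ℝ) + c * (y : ℝ) ^ 2 = (m : ℝ) ^ 2 + (n : ℝ) ^ 2) :
    ∃ k : ℤ, a * c - b ^ 2 / 4 = (k : ℝ) ^ 2 := by
  obtain ⟨hapos, hdet⟩ := hpos
  obtain ⟨m₁, n₁, h10⟩ := hval 1 0
  obtain ⟨m₂, n₂, h01⟩ := hval 0 1
  obtain ⟨m₃, n₃, h11⟩ := hval 1 1
  push_cast at h10 h01 h11
  norm_num at h10 h01 h11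
  obtain ⟨A, hAdef⟩ : ∃ A : ℤ, A = m₁ ^ 2 + n₁ ^ 2 := ⟨_, rfl⟩
  obtain ⟨C, hCdef⟩ : ∃ C : ℤ, C = m₂ ^ 2 + n₂ ^ 2 := ⟨_, rfl⟩
  obtain ⟨B, hBdef⟩ : ∃ B : ℤ, B = (m₃ ^ 2 + n₃ ^ 2) - A - C := ⟨_, rfl⟩
  have hA : a = (A : ℝ) := by rw [hAdef]; push_cast; linarith
  have hC : c = (C : ℝ) := by rw [hCdef]; push_cast; linarith
  have hB : b = (B : ℝ) := by rw [hBdef]; push_cast; linarith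
  obtain ⟨D, hDdef⟩ : ∃ D : ℤ, D = 4 * A * C - B ^ 2 := ⟨_, rfl⟩
  have hDR : (D : ℝ) = 4 * (a * c - b ^ 2 / 4) := by
    rw [hA, hB, hC, hDdef]; push_cast; ring
  have hDpos : 0 < D := by
    have : (0 : ℝ) < (D : ℝ) := by rw [hDR]; linarith
    exact_mod_cast this
  have hApos : 0 < A := by
    have : (0 : ℝ) < (A : ℝ) := by rw [← hA]; exact hapos
    exact_mod_cast this
  have hint : ∀ v : ℤ, ∃ m n : ℤ, A * (v ^ 2 + D) = m ^ 2 + n ^ 2 := by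
    intro v
    obtain ⟨m, n, h⟩ := hval (v - B) (2 * A)
    refine ⟨m, n, ?_⟩
    have hR : ((A : ℝ)) * ((v : ℝ) ^ 2 + (D : ℝ)) = (m : ℝ) ^ 2 + (n : ℝ) ^ 2 := by
      rw [hA, hB, hC] at h
      push_cast at h ⊢
      rw [hDdef]
      push_cast
      linear_combination h
    exact_mod_cast hR
  obtain ⟨AN, hAN⟩ : ∃ AN : ℕ, (AN : ℤ) = A := ⟨A.toNat, Int.toNat_of_nonneg hApos.le⟩
  obtain ⟨DN, hDN⟩ : ∃ DN : ℕ, (DN : ℤ) = D := ⟨D.toNat, Int.toNat_of_nonneg hDpos.le⟩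
  have hANpos : 0 < AN := by omega
  have hDNpos : 0 < DN := by omega
  have hvalN : ∀ v : ℕ, ∃ x y : ℕ, AN * (v ^ 2 + DN) = x ^ 2 + y ^ 2 := by
    intro v
    obtain ⟨m, n, h⟩ := hint (v : ℤ)
    refine ⟨m.natAbs, n.natAbs, ?_⟩
    have : ((AN * (v ^ 2 + DN) : ℕ) : ℤ) = ((m.natAbs ^ 2 + n.natAbs ^ 2 : ℕ) : ℤ) := by
      push_cast
      rw [sq_abs, sq_abs, hAN, hDN]
      exact h
    exact_mod_cast this
  have hANsots : ∃ x y : ℕ, AN = x ^ 2 + y ^ 2 := by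
    refine ⟨m₁.natAbs, n₁.natAbs, ?_⟩
    have : ((AN : ℕ) : ℤ) = ((m₁.natAbs ^ 2 + n₁.natAbs ^ 2 : ℕ) : ℤ) := by
      push_cast
      rw [sq_abs, sq_abs, hAN, hAdef]
    exact_mod_cast this
  have hAs : ∀ q : ℕ, q.Prime → q % 4 = 3 → Even (padicValNat q AN) := by
    intro q hq hq3
    by_cases hd : q ∣ AN
    · exact Nat.eq_sq_add_sq_iff.mp hANsots q (Nat.mem_primeFactors.mpr ⟨hq, hd, hANpos.ne'⟩) hq3
    · rw [padicValNat.eq_zero_of_not_dvd hd]; exact Even.zero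
  obtain ⟨e, he⟩ := aux_key DN hDNpos AN hANpos hAs hvalN
  obtain ⟨E, hEdef⟩ : ∃ E : ℤ, E = (e : ℤ) := ⟨_, rfl⟩
  have hDE : D = E * E := by rw [← hDN, he, hEdef]; push_cast; ring
  have h4AC : B ^ 2 + E ^ 2 = 4 * A * C := by linear_combination hDdef - hDE
  obtain ⟨k, hk⟩ : ∃ k : ℤ, E = 2 * k := by
    rcases Int.even_or_odd E with ⟨k, hk⟩ | ⟨k, hk⟩
    · exact ⟨k, by omega⟩
    · exfalso
      rcases Int.even_or_odd B with ⟨j, hj⟩ | ⟨j, hj⟩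
      · have h41 : (1 : ℤ) = 4 * (A * C - j * j - k * k - k) := by
          linear_combination h4AC - (B + j + j) * hj - (E + 2 * k + 1) * hk
        omega
      · have h42 : (2 : ℤ) = 4 * (A * C - j * j - j - k * k - k) := by
          linear_combination h4AC - (B + 2 * j + 1) * hj - (E + 2 * k + 1) * hk
        omega
  refine ⟨k, ?_⟩
  have hfin : (D : ℝ) = ((2 * k : ℤ) : ℝ) ^ 2 := by
    rw [hDE, hk]; push_cast; ring
  rw [hDR] at hfin
  push_cast at hfin
  linarith
end
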